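/- arXiv:1508.04523 — 9 statements merged into one kernel-verified Lean document; each statement's English description precedes it below -/
import Mathlib

section
/- Let m be a positive integer and let a, b be integers. The congruence a·x ≡ b (mod m) has a solution x with gcd(x,m) = 1 if and only if gcd(a,m) = gcd(b,m). -/
/-!
Congruence modulo `m` and multiplication by a unit mod `m` preserve the gcd with `m`, which gives
one direction. Conversely, in `ZMod m` every element is a unit times a divisor `d` of `m`, and
that divisor is then forced to be `gcd(a, m)`; so `a` and `b` are both associated to the common
gcd, hence to each other.
-/

theorem Int.ModEq.gcd_eq {n a b : ℤ} (h : a ≡ b [ZMOD n]) : a.gcd n = b.gcd n := by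
  rw [← Int.gcd_emod, h.eq, Int.gcd_emod]

theorem Int.gcd_mul_right_cancel_of_gcd_eq_one {a x n : ℤ} (hx : x.gcd n = 1) :
    (a * x).gcd n = a.gcd n := by
  simp only [Int.gcd, Int.natAbs_mul]
  exact Nat.Coprime.gcd_mul_right_cancel _ hx

namespace ZMod

theorem associated_intCast_iff {m : ℕ} {a b : ℤ} :
    Associated (a : ZMod m) (b : ZMod m) ↔ ∃ x : ℤ, x.gcd m = 1 ∧ a * x ≡ b [ZMOD m] := by
  constructor
  · rintro ⟨u, hu⟩
    obtain ⟨x, hx⟩ := intCast_surjective (u : ZMod m)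
    have hxu : IsUnit (x : ZMod m) := hx ▸ u.isUnit
    refine ⟨x, ?_, ?_⟩
    · exact Int.isCoprime_iff_gcd_eq_one.mp ((coe_int_isUnit_iff_isCoprime x m).mp hxu).symm
    · rw [← intCast_eq_intCast_iff, Int.cast_mul, hx, hu]
  · rintro ⟨x, hx, hax⟩
    have hxu : IsUnit (x : ZMod m) :=
      (coe_int_isUnit_iff_isCoprime x m).mpr (Int.isCoprime_iff_gcd_eq_one.mpr hx).symm
    refine ⟨hxu.unit, ?_⟩
    rw [IsUnit.unit_spec, ← Int.cast_mul, intCast_eq_intCast_iff]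
    exact hax

theorem associated_intCast_gcd (m : ℕ) (a : ℤ) :
    Associated (a : ZMod m) ((a.gcd m : ℤ) : ZMod m) := by
  obtain ⟨d, hdm, u, hu, hau⟩ := eq_unit_mul_divisor (a : ZMod m)
  have had : Associated ((d : ℤ) : ZMod m) (a : ZMod m) :=
    ⟨hu.unit, by rw [hau, IsUnit.unit_spec, mul_comm, Int.cast_natCast]⟩
  obtain ⟨x, hx, hdx⟩ := associated_intCast_iff.mp had
  have hgcd : a.gcd m = d := by
    rw [← hdx.gcd_eq, Int.gcd_mul_right_cancel_of_gcd_eq_one hx, Int.gcd_natCast_natCast,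
      Nat.gcd_eq_left hdm]
  rw [hgcd]
  exact had.symm

end ZMod

theorem stmt3_general (m : ℕ) (a b : ℤ) :
    (∃ x : ℤ, Int.gcd x m = 1 ∧ a * x ≡ b [ZMOD (m : ℤ)]) ↔ Int.gcd a m = Int.gcd b m := by
  constructor
  · rintro ⟨x, hx, hax⟩
    rw [← hax.gcd_eq, Int.gcd_mul_right_cancel_of_gcd_eq_one hx]
  · intro hgcd
    exact ZMod.associated_intCast_iff.mp <|
      (ZMod.associated_intCast_gcd m a).trans (hgcd ▸ (ZMod.associated_intCast_gcd m b).symm)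

/-- The congruence `a·x ≡ b (mod m)` has a solution `x` coprime to `m`
if and only if `gcd(a, m) = gcd(b, m)`. -/
theorem stmt3 (m : ℕ) (hm : 0 < m) (a b : ℤ) :
    (∃ x : ℤ, Int.gcd x m = 1 ∧ a * x ≡ b [ZMOD (m : ℤ)]) ↔ Int.gcd a m = Int.gcd b m :=
  stmt3_general m a b
end

section
/- Let C_m = ⟨g⟩ be the cyclic group of order m ≥ 1. A generating pair (g^r, g^s) of C_m is transpositional (i.e., the assignment g^r ↦ g^s, g^s ↦ g^r extends to an automorphism of C_m) if and only if gcd(r,m) = 1 and s ≡ r·e (mod m) for some integer e with e² ≡ 1 (mod m). Moreover, for units r, t mod m and integers e, f with e² ≡ 1 ≡ f² (mod m), there exists an automorphism of C_m sending (g^r, g^{re}) to (g^t, g^{tf}) if and only if e ≡ f (mod m). -/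
/-!
Every additive automorphism of `ZMod m` is multiplication by the unit `σ 1`, so both parts
reduce to equations between units. A swap of `r` and `s` means `s = u r` and `r = u s`; the pair
`(r, u r)` generates only the ideal `(r)`, so generation forces `r` to be a unit, and then
`r = u² r` gives `u² = 1`. For the second part `t = u r` and `t f = u r e` give `t f = t e`.
-/

theorem isUnit_of_closure_pair_eq_top {R : Type*} [CommRing R] {x u : R}
    (h : AddSubgroup.closure {x, u * x} = ⊤) : IsUnit x := by
  have hle : AddSubgroup.closure {x, u * x} ≤ (Ideal.span {x}).toAddSubgroup := by
    rw [AddSubgroup.closure_le, Set.insert_subset_iff, Set.singleton_subset_iff]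
    exact ⟨Ideal.mem_span_singleton_self x,
      Ideal.mul_mem_left _ u (Ideal.mem_span_singleton_self x)⟩
  rw [h, top_le_iff] at hle
  rw [← Ideal.span_singleton_eq_top, Ideal.eq_top_iff_one]
  exact (Submodule.mem_toAddSubgroup _).1 (hle ▸ AddSubgroup.mem_top 1)

theorem exists_unit_swap_iff {M : Type*} [CommMonoid M] {x y : M} (hx : IsUnit x) :
    (∃ u : Mˣ, y = u * x ∧ x = u * y) ↔ ∃ e : M, e ^ 2 = 1 ∧ y = x * e := by
  constructor
  · rintro ⟨u, rfl, hu⟩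
    refine ⟨u, ?_, mul_comm _ _⟩
    rw [← mul_assoc, eq_comm, ← sq] at hu
    exact hx.mul_right_cancel (hu.trans (one_mul x).symm)
  · rintro ⟨e, he, rfl⟩
    refine ⟨(IsUnit.of_mul_eq_one e (by rw [← sq, he])).unit, mul_comm _ _, ?_⟩
    rw [IsUnit.unit_spec, ← mul_assoc, mul_comm e x, mul_assoc, ← sq, he, mul_one]

theorem exists_unit_mul_eq_iff {M : Type*} [CommMonoid M] {x z e f : M} (hx : IsUnit x)
    (hz : IsUnit z) : (∃ u : Mˣ, z = u * x ∧ z * f = u * (x * e)) ↔ e = f := by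
  constructor
  · rintro ⟨u, rfl, h⟩
    rw [← mul_assoc] at h
    exact (hz.mul_left_cancel h).symm
  · rintro rfl
    have hu : z = ↑(hz.unit * hx.unit⁻¹) * x := by simp [mul_assoc]
    exact ⟨_, hu, by rw [← mul_assoc, ← hu]⟩

theorem ZMod.isUnit_intCast_iff_gcd_eq_one {m : ℕ} (r : ℤ) :
    IsUnit (r : ZMod m) ↔ Int.gcd r m = 1 := by
  rw [coe_int_isUnit_iff_isCoprime, isCoprime_comm, Int.isCoprime_iff_gcd_eq_one]

theorem ZMod.exists_int_sq_modEq_one_iff (m : ℕ) (r s : ℤ) :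
    (∃ e : ℤ, e ^ 2 ≡ 1 [ZMOD m] ∧ s ≡ r * e [ZMOD m]) ↔
      ∃ e : ZMod m, e ^ 2 = 1 ∧ (s : ZMod m) = r * e := by
  simp only [← intCast_eq_intCast_iff, Int.cast_pow, Int.cast_mul, Int.cast_one]
  exact (intCast_surjective.exists (p := fun e : ZMod m ↦ e ^ 2 = 1 ∧ (s : ZMod m) = r * e)).symm

theorem ZMod.exists_addAut_apply_eq_iff {m : ℕ} (a b c d : ZMod m) :
    (∃ σ : AddAut (ZMod m), σ a = b ∧ σ c = d) ↔ ∃ u : (ZMod m)ˣ, b = u * a ∧ d = u * c := by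
  constructor
  · rintro ⟨σ, rfl, rfl⟩
    set u := Additive.toMul (AddAutEquivUnits m σ)
    have hσ (x : ZMod m) : σ x = u * x := by
      conv_lhs => rw [← (AddAutEquivUnits m).symm_apply_apply σ, AddAutEquivUnits_symm_apply]
      rfl
    exact ⟨u, hσ a, hσ c⟩
  · rintro ⟨u, rfl, rfl⟩
    exact ⟨AddAut.mulLeft u, rfl, rfl⟩

theorem stmt6_general (m : ℕ) :
    (∀ r s : ℤ, AddSubgroup.closure ({(r : ZMod m), (s : ZMod m)} : Set (ZMod m)) = ⊤ →
      ((∃ σ : AddAut (ZMod m),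
          σ (r : ZMod m) = (s : ZMod m) ∧ σ (s : ZMod m) = (r : ZMod m)) ↔
        (Int.gcd r m = 1 ∧
          ∃ e : ℤ, e ^ 2 ≡ 1 [ZMOD (m : ℤ)] ∧ s ≡ r * e [ZMOD (m : ℤ)]))) ∧
    (∀ r t e f : ℤ, Int.gcd r m = 1 → Int.gcd t m = 1 →
      e ^ 2 ≡ 1 [ZMOD (m : ℤ)] → f ^ 2 ≡ 1 [ZMOD (m : ℤ)] →
      ((∃ σ : AddAut (ZMod m), σ (r : ZMod m) = (t : ZMod m) ∧
          σ ((r * e : ℤ) : ZMod m) = ((t * f : ℤ) : ZMod m)) ↔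
        e ≡ f [ZMOD (m : ℤ)])) := by
  refine ⟨fun r s hgen ↦ ?_, fun r t e f hr ht _ _ ↦ ?_⟩
  · rw [ZMod.exists_addAut_apply_eq_iff, ← ZMod.isUnit_intCast_iff_gcd_eq_one,
      ZMod.exists_int_sq_modEq_one_iff]
    constructor
    · intro hswap
      have hr : IsUnit (r : ZMod m) := by
        obtain ⟨u, hs, -⟩ := hswap
        rw [hs] at hgen
        exact isUnit_of_closure_pair_eq_top hgen
      exact ⟨hr, (exists_unit_swap_iff hr).1 hswap⟩
    · rintro ⟨hr, he⟩
      exact (exists_unit_swap_iff hr).2 he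
  · rw [ZMod.exists_addAut_apply_eq_iff, ← ZMod.intCast_eq_intCast_iff, Int.cast_mul, Int.cast_mul]
    exact exists_unit_mul_eq_iff ((ZMod.isUnit_intCast_iff_gcd_eq_one r).2 hr)
      ((ZMod.isUnit_intCast_iff_gcd_eq_one t).2 ht)

/-- In the cyclic group `C_m = ℤ/mℤ` (generator `g = 1`):
(a) a generating pair `(g^r, g^s)` is transpositional (some automorphism swaps the two
entries) iff `gcd(r, m) = 1` and `s ≡ r·e (mod m)` for some `e` with `e² ≡ 1 (mod m)`;
(b) for units `r, t` mod `m` and `e, f` with `e² ≡ 1 ≡ f² (mod m)`, an automorphism sends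
`(g^r, g^{re})` to `(g^t, g^{tf})` iff `e ≡ f (mod m)`. -/
theorem stmt6 (m : ℕ) (hm : 1 ≤ m) :
    (∀ r s : ℤ, AddSubgroup.closure ({(r : ZMod m), (s : ZMod m)} : Set (ZMod m)) = ⊤ →
      ((∃ σ : AddAut (ZMod m),
          σ (r : ZMod m) = (s : ZMod m) ∧ σ (s : ZMod m) = (r : ZMod m)) ↔
        (Int.gcd r m = 1 ∧
          ∃ e : ℤ, e ^ 2 ≡ 1 [ZMOD (m : ℤ)] ∧ s ≡ r * e [ZMOD (m : ℤ)]))) ∧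
    (∀ r t e f : ℤ, Int.gcd r m = 1 → Int.gcd t m = 1 →
      e ^ 2 ≡ 1 [ZMOD (m : ℤ)] → f ^ 2 ≡ 1 [ZMOD (m : ℤ)] →
      ((∃ σ : AddAut (ZMod m), σ (r : ZMod m) = (t : ZMod m) ∧
          σ ((r * e : ℤ) : ZMod m) = ((t * f : ℤ) : ZMod m)) ↔
        e ≡ f [ZMOD (m : ℤ)])) :=
  stmt6_general m
end

section
/- Let G₁ = ⟨x₁,y₁⟩ and G₂ = ⟨x₂,y₂⟩ be finite groups, and set lᵢ = o(xᵢ), mᵢ = o(yᵢ), nᵢ = o(xᵢyᵢ) for i = 1,2. If at least two of the three conditions gcd(l₁,l₂) = 1, gcd(m₁,m₂) = 1, gcd(n₁,n₂) = 1 are satisfied, then the subgroup of the direct product G₁ × G₂ generated by the elements x = (x₁,x₂) and y = (y₁,y₂) is all of G₁ × G₂. -/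
private lemma pow_bezout {G : Type*} [Group G] (g : G) {n : ℕ}
    (hc : Nat.Coprime (orderOf g) n) : ∃ k : ℤ, (g ^ n) ^ k = g := by
  refine ⟨Nat.gcdB (orderOf g) n, ?_⟩
  have hb : (1 : ℤ) = (orderOf g) * Nat.gcdA (orderOf g) n + n * Nat.gcdB (orderOf g) n := by
    have := Nat.gcd_eq_gcd_ab (orderOf g) n
    rw [hc] at this; exact_mod_cast this
  calc (g ^ n) ^ Nat.gcdB (orderOf g) n
      = g ^ ((n : ℤ) * Nat.gcdB (orderOf g) n) := by rw [← zpow_natCast, ← zpow_mul]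
    _ = g ^ ((1 : ℤ) - (orderOf g) * Nat.gcdA (orderOf g) n) := by rw [hb]; ring_nf
    _ = g := by
        rw [zpow_sub, zpow_one, zpow_mul, zpow_natCast, pow_orderOf_eq_one, one_zpow, inv_one,
          mul_one]

private lemma split_mem {G₁ G₂ : Type*} [Group G₁] [Group G₂] (H : Subgroup (G₁ × G₂))
    {g₁ : G₁} {g₂ : G₂} (hc : Nat.Coprime (orderOf g₁) (orderOf g₂))
    (hm : (g₁, g₂) ∈ H) : (g₁, (1 : G₂)) ∈ H ∧ ((1 : G₁), g₂) ∈ H := by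
  constructor
  · obtain ⟨k, hk⟩ := pow_bezout g₁ hc
    have : (((g₁, g₂) : G₁ × G₂) ^ orderOf g₂) ^ k = (g₁, 1) := by
      ext <;> simp [hk, pow_orderOf_eq_one]
    exact this ▸ H.zpow_mem (H.pow_mem hm _) k
  · obtain ⟨k, hk⟩ := pow_bezout g₂ hc.symm
    have : (((g₁, g₂) : G₁ × G₂) ^ orderOf g₁) ^ k = (1, g₂) := by
      ext <;> simp [hk, pow_orderOf_eq_one]
    exact this ▸ H.zpow_mem (H.pow_mem hm _) k

/-- If `G₁ = ⟨x₁, y₁⟩`, `G₂ = ⟨x₂, y₂⟩` are finite groups and at least two of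
the conditions `gcd(o(x₁), o(x₂)) = 1`, `gcd(o(y₁), o(y₂)) = 1`, `gcd(o(x₁y₁), o(x₂y₂)) = 1`
hold, then `(x₁, x₂)` and `(y₁, y₂)` generate the whole direct product `G₁ × G₂`. -/
theorem stmt7 {G₁ G₂ : Type*} [Group G₁] [Group G₂] [Finite G₁] [Finite G₂]
    (x₁ y₁ : G₁) (x₂ y₂ : G₂)
    (hgen₁ : Subgroup.closure ({x₁, y₁} : Set G₁) = ⊤)
    (hgen₂ : Subgroup.closure ({x₂, y₂} : Set G₂) = ⊤)
    (h : (Nat.Coprime (orderOf x₁) (orderOf x₂) ∧ Nat.Coprime (orderOf y₁) (orderOf y₂)) ∨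
         (Nat.Coprime (orderOf x₁) (orderOf x₂) ∧
           Nat.Coprime (orderOf (x₁ * y₁)) (orderOf (x₂ * y₂))) ∨
         (Nat.Coprime (orderOf y₁) (orderOf y₂) ∧
           Nat.Coprime (orderOf (x₁ * y₁)) (orderOf (x₂ * y₂)))) :
    Subgroup.closure ({(x₁, x₂), (y₁, y₂)} : Set (G₁ × G₂)) = ⊤ := by
  set H := Subgroup.closure ({(x₁, x₂), (y₁, y₂)} : Set (G₁ × G₂)) with hH
  have hx : (x₁, x₂) ∈ H := Subgroup.subset_closure (by simp)
  have hy : (y₁, y₂) ∈ H := Subgroup.subset_closure (by simp)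
  have hxy : (x₁ * y₁, x₂ * y₂) ∈ H := H.mul_mem hx hy
  have key : ((x₁, (1:G₂)) ∈ H ∧ ((1:G₁), x₂) ∈ H) ∧ ((y₁, (1:G₂)) ∈ H ∧ ((1:G₁), y₂) ∈ H) := by
    rcases h with ⟨hcx, hcy⟩ | ⟨hcx, hcxy⟩ | ⟨hcy, hcxy⟩
    · exact ⟨split_mem H hcx hx, split_mem H hcy hy⟩
    · obtain ⟨hx1, hx2⟩ := split_mem H hcx hx
      obtain ⟨hxy1, hxy2⟩ := split_mem H hcxy hxy
      refine ⟨⟨hx1, hx2⟩, ?_, ?_⟩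
      · have := H.mul_mem (H.inv_mem hx1) hxy1
        simpa [mul_assoc] using this
      · have := H.mul_mem (H.inv_mem hx2) hxy2
        simpa [mul_assoc] using this
    · obtain ⟨hy1, hy2⟩ := split_mem H hcy hy
      obtain ⟨hxy1, hxy2⟩ := split_mem H hcxy hxy
      refine ⟨⟨?_, ?_⟩, hy1, hy2⟩
      · have := H.mul_mem hxy1 (H.inv_mem hy1)
        simpa [mul_assoc] using this
      · have := H.mul_mem hxy2 (H.inv_mem hy2)
        simpa [mul_assoc] using this
  obtain ⟨⟨hx1, hx2⟩, hy1, hy2⟩ := key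
  have hG₁ : ∀ g : G₁, (g, (1:G₂)) ∈ H := by
    intro g
    have : Subgroup.closure ({x₁, y₁} : Set G₁) ≤ H.comap (MonoidHom.inl G₁ G₂) := by
      rw [Subgroup.closure_le]
      rintro a (rfl | rfl) <;> simpa
    have := this (by rw [hgen₁]; trivial : g ∈ Subgroup.closure ({x₁, y₁} : Set G₁))
    simpa using this
  have hG₂ : ∀ g : G₂, ((1:G₁), g) ∈ H := by
    intro g
    have : Subgroup.closure ({x₂, y₂} : Set G₂) ≤ H.comap (MonoidHom.inr G₁ G₂) := by
      rw [Subgroup.closure_le]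
      rintro a (rfl | rfl) <;> simpa
    have := this (by rw [hgen₂]; trivial : g ∈ Subgroup.closure ({x₂, y₂} : Set G₂))
    simpa using this
  rw [eq_top_iff]
  rintro ⟨a, b⟩ -
  have : ((a, (1:G₂)) : G₁ × G₂) * (1, b) = (a, b) := by simp
  exact this ▸ H.mul_mem (hG₁ a) (hG₂ b)
end

section
/- Let G = ⟨x,y⟩ be a finite group with o(x) = l and o(y) = m, and suppose the subgroup K = ⟨x⟩ ∩ ⟨y⟩ has order k ≥ 1. Then there exists an integer e coprime to k such that x^{l/k} = y^{e·m/k}. If moreover there is an automorphism of G transposing x and y, then l = m and e² ≡ 1 (mod k). -/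
private lemma aux_mem {G : Type*} [Group G] (z g : G) (k : ℕ) (hk : 0 < k)
    (hkd : k ∣ orderOf z) (hg : g ∈ Subgroup.zpowers z) (h1 : g ^ k = 1) :
    g ∈ Subgroup.zpowers (z ^ (orderOf z / k)) := by
  obtain ⟨a, rfl⟩ := Subgroup.mem_zpowers_iff.mp hg
  have h2 : (z : G) ^ (a * k) = 1 := by
    rw [zpow_mul, zpow_natCast, h1]
  have h3 : (orderOf z : ℤ) ∣ a * k := orderOf_dvd_iff_zpow_eq_one.mpr h2
  have h4 : ((orderOf z / k : ℕ) : ℤ) * (k : ℤ) ∣ a * k := by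
    rwa [← Int.natCast_mul, Nat.div_mul_cancel hkd]
  have h5 : ((orderOf z / k : ℕ) : ℤ) ∣ a :=
    (mul_dvd_mul_iff_right (by exact_mod_cast hk.ne' : (k : ℤ) ≠ 0)).mp h4
  obtain ⟨b, hb⟩ := h5
  refine ⟨b, ?_⟩
  show (z ^ (orderOf z / k)) ^ b = z ^ a
  rw [hb, ← zpow_natCast z (orderOf z / k), ← zpow_mul]

/-- Let `G = ⟨x, y⟩` be finite with `o(x) = l`, `o(y) = m` and
`K = ⟨x⟩ ∩ ⟨y⟩` of order `k ≥ 1`. Then `x^{l/k} = y^{e·m/k}` for some `e` coprime to `k`;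
moreover if some automorphism of `G` transposes `x` and `y`, then `l = m` and
`e² ≡ 1 (mod k)`. -/
theorem stmt8 {G : Type*} [Group G] [Finite G] (x y : G)
    (hgen : Subgroup.closure ({x, y} : Set G) = ⊤)
    (l m k : ℕ) (hl : orderOf x = l) (hm : orderOf y = m)
    (hk : Nat.card (↥(Subgroup.zpowers x ⊓ Subgroup.zpowers y)) = k) (hk1 : 1 ≤ k) :
    ∃ e : ℕ, Nat.Coprime e k ∧ x ^ (l / k) = y ^ (e * (m / k)) ∧
      ((∃ τ : MulAut G, τ x = y ∧ τ y = x) → l = m ∧ e ^ 2 ≡ 1 [MOD k]) := by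
  subst hl hm
  set K := Subgroup.zpowers x ⊓ Subgroup.zpowers y with hK
  have hk0 : 0 < k := hk1
  have hl0 : 0 < orderOf x := orderOf_pos x
  have hm0 : 0 < orderOf y := orderOf_pos y
  have hkl : k ∣ orderOf x := by
    have := Subgroup.card_dvd_of_le (inf_le_left : K ≤ Subgroup.zpowers x)
    rwa [Nat.card_zpowers, hk] at this
  have hkm : k ∣ orderOf y := by
    have := Subgroup.card_dvd_of_le (inf_le_right : K ≤ Subgroup.zpowers y)
    rwa [Nat.card_zpowers, hk] at this
  set X := x ^ (orderOf x / k) with hXdef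
  set Y := y ^ (orderOf y / k) with hYdef
  have hoX : orderOf X = k := by
    rw [hXdef, orderOf_pow, Nat.gcd_eq_right (Nat.div_dvd_of_dvd hkl),
      Nat.div_div_self hkl hl0.ne']
  have hoY : orderOf Y = k := by
    rw [hYdef, orderOf_pow, Nat.gcd_eq_right (Nat.div_dvd_of_dvd hkm),
      Nat.div_div_self hkm hm0.ne']
  -- K ≤ zpowers X
  have hKX : K ≤ Subgroup.zpowers X := by
    intro g hg
    have h1 : g ^ k = 1 := by
      have h2 : (⟨g, hg⟩ : K) ^ k = 1 := by
        rw [← hk]; exact pow_card_eq_one'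
      simpa using congrArg (Subtype.val) h2
    exact aux_mem x g k hk0 hkl (Subgroup.mem_inf.mp hg).1 h1
  have hKXeq : K = Subgroup.zpowers X := by
    apply Subgroup.eq_of_le_of_card_ge hKX
    rw [hk, Nat.card_zpowers, hoX]
  have hXK : X ∈ K := hKXeq ▸ Subgroup.mem_zpowers X
  have hXY : X ∈ Subgroup.zpowers Y := by
    refine aux_mem y X k hk0 hkm (Subgroup.mem_inf.mp hXK).2 ?_
    rw [← hoX, pow_orderOf_eq_one]
  obtain ⟨n, hn⟩ := Subgroup.mem_zpowers_iff.mp hXY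
  -- reduce n mod k
  have hYk : Y ^ (k : ℤ) = 1 := by
    rw [zpow_natCast, ← hoY, pow_orderOf_eq_one]
  set e : ℕ := (n % (k : ℤ)).toNat with he
  have hnn : (0 : ℤ) ≤ n % (k : ℤ) := Int.emod_nonneg n (by exact_mod_cast hk0.ne')
  have hYe : Y ^ e = X := by
    have h6 : Y ^ (n % (k : ℤ)) = Y ^ n := by
      conv_rhs => rw [← Int.emod_add_mul_ediv n (k : ℤ)]
      rw [zpow_add, zpow_mul, hYk, one_zpow, mul_one]
    rw [← hn, ← h6, ← zpow_natCast, he, Int.toNat_of_nonneg hnn]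
  have hcop : Nat.Coprime e k := by
    have h1 : orderOf (Y ^ e) = k := by rw [hYe, hoX]
    rw [orderOf_pow, hoY] at h1
    have h3 : Nat.gcd k e = 1 := by
      rcases (Nat.div_eq_self.mp h1) with h | h
      · omega
      · exact h
    exact Nat.coprime_comm.mp h3
  have hmain : x ^ (orderOf x / k) = y ^ (e * (orderOf y / k)) := by
    rw [mul_comm, pow_mul]
    exact hYe.symm
  refine ⟨e, hcop, hmain, ?_⟩
  rintro ⟨τ, hτx, hτy⟩
  have hlm : orderOf x = orderOf y := by
    have h7 := orderOf_injective τ.toMonoidHom τ.injective x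
    simp only [MulEquiv.coe_toMonoidHom, hτx] at h7
    exact h7.symm
  refine ⟨hlm, ?_⟩
  have happ : y ^ (orderOf y / k) = x ^ (e * (orderOf y / k)) := by
    have h8 := congrArg τ hmain
    rw [map_pow, map_pow, hτx, hτy, hlm] at h8
    exact h8
  have hfin : y ^ (orderOf y / k) = y ^ (e * e * (orderOf y / k)) := by
    calc y ^ (orderOf y / k) = x ^ (e * (orderOf y / k)) := happ
      _ = (x ^ (orderOf x / k)) ^ e := by rw [← pow_mul, hlm]; congr 1; ring
      _ = (y ^ (e * (orderOf y / k))) ^ e := by rw [hmain]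
      _ = y ^ (e * e * (orderOf y / k)) := by rw [← pow_mul]; congr 1; ring
  have hmod : (orderOf y / k) ≡ e * e * (orderOf y / k) [MOD orderOf y] :=
    pow_eq_pow_iff_modEq.mp hfin
  have hmk : orderOf y = k * (orderOf y / k) := (Nat.mul_div_cancel' hkm).symm
  have hmod2 : 1 * (orderOf y / k) ≡ (e * e) * (orderOf y / k) [MOD k * (orderOf y / k)] := by
    rw [one_mul, ← hmk]; exact hmod
  have hdiv : (1 : ℕ) ≡ e * e [MOD k] := by
    refine Nat.ModEq.mul_right_cancel' ?_ hmod2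
    have : 0 < orderOf y / k := Nat.div_pos (Nat.le_of_dvd hm0 hkm) hk0
    omega
  rw [pow_two]
  exact hdiv.symm
end

section
/- Let p be a prime, 0 ≤ a ≤ b integers, and let G be a group isomorphic to ℤ_{p^a} ⊕ ℤ_{p^b} generated by a pair (x,y) with o(x) = p^b. Then there exist an integer c with 0 ≤ c ≤ b − a and an integer e coprime to p such that o(y) = p^{a+c} and y^{p^a} = x^{e·p^{b−c}}. -/
/-- If `A ≅ ℤ_{p^a} ⊕ ℤ_{p^b}` (`0 ≤ a ≤ b`, `p` prime) is generated by
`(x, y)` with `o(x) = p^b`, then there are `0 ≤ c ≤ b − a` and `e` coprime to `p` with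
`o(y) = p^{a+c}` and `p^a · y = e·p^{b−c} · x` (written additively). -/
theorem stmt11 (p a b : ℕ) (hp : p.Prime) (hab : a ≤ b)
    {A : Type*} [AddCommGroup A] (iso : A ≃+ ZMod (p ^ a) × ZMod (p ^ b))
    (x y : A) (hgen : AddSubgroup.closure ({x, y} : Set A) = ⊤)
    (hx : addOrderOf x = p ^ b) :
    ∃ c : ℕ, c ≤ b - a ∧ ∃ e : ℤ, Int.gcd e p = 1 ∧
      addOrderOf y = p ^ (a + c) ∧
      ((p : ℤ) ^ a) • y = (e * (p : ℤ) ^ (b - c)) • x := by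
  have hp1 : 1 < p := hp.one_lt
  have hpa0 : (p : ℕ) ^ a ≠ 0 := pow_ne_zero _ hp.pos.ne'
  have hpb0 : (p : ℕ) ^ b ≠ 0 := pow_ne_zero _ hp.pos.ne'
  haveI : NeZero (p ^ a) := ⟨hpa0⟩
  haveI : NeZero (p ^ b) := ⟨hpb0⟩
  have hfinA : Finite A := Finite.of_equiv _ iso.symm.toEquiv
  -- every element is killed by p^b
  have hkill : ∀ g : A, (p ^ b) • g = 0 := by
    intro g
    apply iso.injective
    rw [map_nsmul, map_zero]
    ext
    · show (p ^ b) • (iso g).1 = 0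
      rw [nsmul_eq_mul]
      have : ((p ^ b : ℕ) : ZMod (p ^ a)) = 0 :=
        (ZMod.natCast_eq_zero_iff _ _).mpr (pow_dvd_pow p hab)
      rw [this, zero_mul]
    · show (p ^ b) • (iso g).2 = 0
      rw [nsmul_eq_mul]
      have : ((p ^ b : ℕ) : ZMod (p ^ b)) = 0 :=
        (ZMod.natCast_eq_zero_iff _ _).mpr dvd_rfl
      rw [this, zero_mul]
  have hcardA : Nat.card A = p ^ a * p ^ b := by
    rw [Nat.card_congr iso.toEquiv, Nat.card_prod, Nat.card_zmod, Nat.card_zmod]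
  -- quotient by ⟨x⟩
  set H := AddSubgroup.zmultiples x with hH
  set Q := A ⧸ H with hQ
  have hcardH : Nat.card H = p ^ b := by rw [Nat.card_zmultiples, hx]
  have hcardQ : Nat.card Q = p ^ a := by
    have := AddSubgroup.card_eq_card_quotient_mul_card_addSubgroup H
    rw [hcardA, hcardH] at this
    exact (Nat.eq_of_mul_eq_mul_right (Nat.pos_of_ne_zero hpb0) this.symm)
  -- Q is generated by the image of y
  have hmkx : (QuotientAddGroup.mk' H) x = 0 := by
    rw [QuotientAddGroup.mk'_apply, QuotientAddGroup.eq_zero_iff]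
    exact AddSubgroup.mem_zmultiples x
  have hgenQ : AddSubgroup.zmultiples ((QuotientAddGroup.mk' H) y) = (⊤ : AddSubgroup Q) := by
    rw [AddSubgroup.zmultiples_eq_closure]
    have h1 : (AddSubgroup.closure ({x, y} : Set A)).map (QuotientAddGroup.mk' H) = ⊤ := by
      rw [hgen]
      rw [← AddMonoidHom.range_eq_map]
      exact AddMonoidHom.range_eq_top_of_surjective _ (QuotientAddGroup.mk'_surjective H)
    rw [AddMonoidHom.map_closure] at h1
    rw [Set.image_insert_eq, Set.image_singleton, hmkx] at h1
    refine top_le_iff.mp ?_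
    rw [← h1]
    refine (AddSubgroup.closure_le _).mpr ?_
    rintro g (rfl | rfl)
    · exact AddSubgroup.zero_mem _
    · exact AddSubgroup.subset_closure rfl
  have hoy' : addOrderOf ((QuotientAddGroup.mk' H) y) = p ^ a := by
    rw [← Nat.card_zmultiples, hgenQ, ← hcardQ]
    exact AddSubgroup.card_top
  -- order of y is p^k with a ≤ k ≤ b
  have hdvd1 : addOrderOf y ∣ p ^ b :=
    addOrderOf_dvd_iff_nsmul_eq_zero.mpr (hkill y)
  obtain ⟨k, hkb, hk⟩ := (Nat.dvd_prime_pow hp).mp hdvd1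
  have hak : a ≤ k := by
    have h1 : p ^ a ∣ p ^ k := by
      rw [← hoy', ← hk]; exact addOrderOf_map_dvd _ y
    exact (Nat.pow_dvd_pow_iff_le_right hp1).mp h1
  -- p^a • y ∈ ⟨x⟩
  have hmem : (p ^ a) • y ∈ H := by
    rw [← QuotientAddGroup.eq_zero_iff, ← QuotientAddGroup.mk'_apply, map_nsmul]
    exact addOrderOf_dvd_iff_nsmul_eq_zero.mp (hoy' ▸ dvd_refl _)
  obtain ⟨m, hm⟩ := AddSubgroup.mem_zmultiples_iff.mp hmem
  -- order of p^a • y is p^(k-a)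
  have hord_pay : addOrderOf ((p ^ a) • y) = p ^ (k - a) := by
    rw [addOrderOf_nsmul' y hpa0, hk, Nat.gcd_eq_right (pow_dvd_pow p hak),
      Nat.pow_div hak hp.pos]
  set c := k - a with hc
  have hkac : k = a + c := by omega
  have hcba : c ≤ b - a := by omega
  have hzsmul_a : ((p : ℤ) ^ a) • y = (p ^ a) • y := by
    rw [← Nat.cast_pow, natCast_zsmul]
  have hzsmul_bx : ((p : ℤ) ^ b) • x = 0 := by
    rw [← Nat.cast_pow, natCast_zsmul]; exact hkill x
  rcases Nat.eq_zero_or_pos c with hc0 | hcpos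
  · -- c = 0 : p^a • y = 0
    refine ⟨0, by omega, 1, by simp, ?_, ?_⟩
    · rw [hk, hkac, hc0]
    · have h0 : (p ^ a) • y = 0 := by
        have := hord_pay
        rw [hc0, pow_zero, AddMonoid.addOrderOf_eq_one_iff] at this
        exact this
      rw [hzsmul_a, h0, one_mul, Nat.sub_zero]
      rw [hzsmul_bx]
  · -- c ≥ 1
    have hzkill : ∀ g : A, ((p : ℤ) ^ b) • g = 0 := by
      intro g
      rw [← Nat.cast_pow, natCast_zsmul]
      exact hkill g
    have hxm : m • x ≠ 0 := by
      rw [hm]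
      intro h0
      rw [h0, addOrderOf_zero] at hord_pay
      have h2 : (1 : ℕ) < p ^ c := Nat.one_lt_pow (by omega) hp1
      omega
    -- replace m by a natural number n with n • x = m • x
    set n : ℕ := (m % (p ^ b : ℤ)).toNat with hn
    have hnm : (n : ℤ) = m % (p ^ b : ℤ) := by
      rw [hn, Int.toNat_of_nonneg]
      exact Int.emod_nonneg m (by exact_mod_cast hpb0)
    have hnx : (n : ℤ) • x = m • x := by
      have hd : ((p : ℤ) ^ b) ∣ (m - (n : ℤ)) :=
        ⟨m / ((p : ℤ) ^ b), by rw [hnm, Int.emod_def]; ring⟩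
      obtain ⟨q, hq⟩ := hd
      have h2 : m • x - (n : ℤ) • x = 0 := by
        rw [← sub_smul, hq, mul_smul, hzkill]
      exact (sub_eq_zero.mp h2).symm
    have hnx' : n • x = m • x := by rw [← natCast_zsmul, hnx]
    have hn0 : n ≠ 0 := by
      intro h0
      rw [h0] at hnx'
      simp at hnx'
      exact hxm hnx'.symm
    -- order of n • x
    have hordnx : addOrderOf (n • x) = p ^ c := by
      rw [hnx', hm, hord_pay]
    have hord2 : p ^ b / Nat.gcd (p ^ b) n = p ^ c := by
      rw [← hx, ← addOrderOf_nsmul' x hn0, hx] at *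
      rw [← hordnx, addOrderOf_nsmul' x hn0, hx]
    -- gcd (p^b) n = p^(b-c)
    obtain ⟨j, hjb, hj⟩ := (Nat.dvd_prime_pow hp).mp (Nat.gcd_dvd_left (p ^ b) n)
    have hgcdn : Nat.gcd (p ^ b) n = p ^ (b - c) := by
      rw [hj] at hord2
      rw [Nat.pow_div hjb hp.pos] at hord2
      have : b - j = c := Nat.pow_right_injective hp.two_le hord2
      rw [hj]
      congr 1
      have hjdvd : p ^ j ∣ p ^ b := pow_dvd_pow p hjb
      omega
    have hdvdn : p ^ (b - c) ∣ n := hgcdn ▸ Nat.gcd_dvd_right (p ^ b) n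
    obtain ⟨e', he'⟩ := hdvdn
    have hcb : c ≤ b := by omega
    -- e' is coprime to p
    have hcop : Nat.gcd e' p = 1 := by
      refine Nat.Coprime.symm ((Nat.Prime.coprime_iff_not_dvd hp).mpr ?_)
      intro hpe
      have : p ^ (b - c + 1) ∣ n := by
        obtain ⟨f, hf⟩ := hpe
        exact ⟨f, by rw [he', hf]; ring⟩
      have : p ^ (b - c + 1) ∣ Nat.gcd (p ^ b) n :=
        Nat.dvd_gcd (pow_dvd_pow p (by omega)) this
      rw [hgcdn] at this
      have := (Nat.pow_dvd_pow_iff_le_right hp1).mp this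
      omega
    refine ⟨c, hcba, (e' : ℤ), ?_, ?_, ?_⟩
    · rw [Int.gcd_natCast_natCast]
      exact hcop
    · rw [hk, hkac]
    · rw [hzsmul_a, ← hm, ← hnx', ← natCast_zsmul]
      congr 1
      rw [he']
      push_cast
      ring
end

section
/- Let 1 ≤ n ≤ m be integers with n dividing m, and let G = ℤ_n ⊕ ℤ_m. Then the number N of orbits of Aut(G) acting componentwise on the set of generating pairs of G equals the Dedekind totient ψ(m/n); equivalently, N · ∏_{p prime, p | (m/n)} p = (m/n) · ∏_{p prime, p | (m/n)} (p + 1). -/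
/-
The orbit of a generating pair (x, y) of G = ℤ_n ⊕ ℤ_m is determined by the kernel of the
surjection (a, b) ↦ a x + b y from (ℤ_m)² onto G, since two surjections with the same kernel differ
by an automorphism of G. Writing m = n k, these kernels are exactly the cyclic submodules
⟨n v⟩ with v a unimodular pair in ℤ_m, and ⟨n v⟩ depends only on the line spanned by v mod k.
Unimodular pairs lift from ℤ_k to ℤ_m, so the orbits are the points of the projective line
P¹(ℤ_k), whose size is (number of unimodular pairs mod k) / φ(k) = ψ(k); the number of unimodular
pairs, k² ∏ (1 - 1/p²), is computed prime power by prime power through the Chinese remainder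
theorem.
-/
theorem Nat.card_eq_card_range_mul {α β γ : Type*} (f : α → β)
    (e : ∀ a, {a' // f a' = f a} ≃ γ) :
    Nat.card α = Nat.card (Set.range f) * Nat.card γ := by
  rw [← Nat.card_prod, ← Nat.card_congr (Equiv.sigmaEquivProd _ _),
    ← Nat.card_congr (Equiv.sigmaFiberEquiv (Set.rangeFactorization f))]
  refine Nat.card_congr (Equiv.sigmaCongrRight fun b =>
    (Equiv.subtypeEquivRight fun a => ?_).trans (e b.2.choose))
  rw [b.2.choose_spec]
  exact Subtype.ext_iff

theorem Nat.card_quot_eq_card_range {α β : Type*} {r : α → α → Prop} (f : α → β)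
    (h : ∀ a b, r a b ↔ f a = f b) : Nat.card (Quot r) = Nat.card (Set.range f) :=
  Nat.card_congr ((Quot.congrRight h).trans (Setoid.quotientKerEquivRange f))

abbrev UnimodularPair (R : Type*) [CommSemiring R] := {v : R × R // IsCoprime v.1 v.2}

theorem isCoprime_prod_iff {R S : Type*} [CommSemiring R] [CommSemiring S] {x y : R × S} :
    IsCoprime x y ↔ IsCoprime x.1 y.1 ∧ IsCoprime x.2 y.2 where
  mp h := ⟨h.map (RingHom.fst R S), h.map (RingHom.snd R S)⟩
  mpr := fun ⟨⟨a, b, h₁⟩, ⟨c, d, h₂⟩⟩ => ⟨(a, c), (b, d), Prod.ext h₁ h₂⟩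

namespace UnimodularPair

variable {R S : Type*} [CommSemiring R] [CommSemiring S]

def map (f : R →+* S) (v : UnimodularPair R) : UnimodularPair S :=
  ⟨(f v.1.1, f v.1.2), v.2.map f⟩

def mapEquiv (e : R ≃+* S) : UnimodularPair R ≃ UnimodularPair S where
  toFun := map e
  invFun := map e.symm
  left_inv v := by ext <;> simp [map]
  right_inv v := by ext <;> simp [map]

def prodEquiv : UnimodularPair (R × S) ≃ UnimodularPair R × UnimodularPair S :=
  ((Equiv.prodProdProdComm R S R S).subtypeEquiv fun _ => isCoprime_prod_iff).trans
    (Equiv.subtypeProdEquivProd (p := fun u : R × R => IsCoprime u.1 u.2)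
      (q := fun u : S × S => IsCoprime u.1 u.2))

end UnimodularPair

theorem card_unimodularPair_zmod_mul {a b : ℕ} (hab : a.Coprime b) :
    Nat.card (UnimodularPair (ZMod (a * b))) =
      Nat.card (UnimodularPair (ZMod a)) * Nat.card (UnimodularPair (ZMod b)) := by
  rw [Nat.card_congr ((UnimodularPair.mapEquiv (ZMod.chineseRemainder hab)).trans
    UnimodularPair.prodEquiv), Nat.card_prod]

theorem card_nonunits_zmod_add_totient (q : ℕ) [NeZero q] :
    Nat.card {x : ZMod q // ¬IsUnit x} + q.totient = q := by
  have units_eq : Nat.card (ZMod q)ˣ = Nat.card {x : ZMod q // IsUnit x} :=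
    Nat.card_congr (Equiv.ofInjective _ Units.val_injective)
  rw [← ZMod.card_units_eq_totient, ← Nat.card_eq_fintype_card, units_eq, add_comm,
    ← Nat.card_sum, Nat.card_congr (Equiv.sumCompl _), Nat.card_zmod]

namespace ZMod

variable {p e : ℕ} [Fact p.Prime]

theorem isUnit_prime_pow_iff_castHom_ne_zero (x : ZMod (p ^ (e + 1))) :
    IsUnit x ↔ castHom (dvd_pow_self p e.succ_ne_zero) (ZMod p) x ≠ 0 := by
  rw [← natCast_zmod_val x, map_natCast, isUnit_natCast_iff_not_dvd_pow Fact.out e.succ_pos,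
    ne_eq, natCast_eq_zero_iff]

theorem isCoprime_prime_pow_iff {x y : ZMod (p ^ (e + 1))} :
    IsCoprime x y ↔ IsUnit x ∨ IsUnit y := by
  refine ⟨fun h => ?_, ?_⟩
  · simp only [isUnit_prime_pow_iff_castHom_ne_zero, ← not_and_or]
    rintro ⟨hx, hy⟩
    simpa [hx, hy] using h.map (castHom (dvd_pow_self p e.succ_ne_zero) (ZMod p))
  · rintro (hx | hy)
    · exact ⟨↑hx.unit⁻¹, 0, by simp⟩
    · exact ⟨0, ↑hy.unit⁻¹, by simp⟩

end ZMod

theorem card_unimodularPair_zmod_prime_pow {p : ℕ} (hp : p.Prime) (e : ℕ) :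
    Nat.card (UnimodularPair (ZMod (p ^ (e + 1)))) + p ^ e * p ^ e =
      p ^ (e + 1) * p ^ (e + 1) := by
  have : Fact p.Prime := ⟨hp⟩
  have card_nonunits : Nat.card {x : ZMod (p ^ (e + 1)) // ¬IsUnit x} = p ^ e := by
    have h := card_nonunits_zmod_add_totient (p ^ (e + 1))
    have hq : p ^ (e + 1) = p ^ e * (p - 1) + p ^ e := by
      rw [pow_succ, ← Nat.mul_add_one, Nat.sub_add_cancel hp.one_le]
    rw [Nat.totient_prime_pow_succ hp] at h
    omega
  have unimodular_iff (v : ZMod (p ^ (e + 1)) × ZMod (p ^ (e + 1))) :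
      IsCoprime v.1 v.2 ↔ ¬(¬IsUnit v.1 ∧ ¬IsUnit v.2) := by
    rw [ZMod.isCoprime_prime_pow_iff]
    tauto
  rw [Nat.card_congr (Equiv.subtypeEquivRight unimodular_iff), ← card_nonunits, ← Nat.card_prod,
    ← Nat.card_congr (Equiv.subtypeProdEquivProd (p := fun x : ZMod (p ^ (e + 1)) => ¬IsUnit x)
      (q := fun x => ¬IsUnit x)), add_comm, ← Nat.card_sum,
    Nat.card_congr (Equiv.sumCompl _), Nat.card_prod, Nat.card_zmod]

theorem card_unimodularPair_zmod_mul_prod_primeFactors (k : ℕ) :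
    Nat.card (UnimodularPair (ZMod k)) * ∏ p ∈ k.primeFactors, p =
      k.totient * (k * ∏ p ∈ k.primeFactors, (p + 1)) := by
  induction k using Nat.recOnPosPrimePosCoprime with
  | prime_pow p e hp he =>
    obtain ⟨e, rfl⟩ := Nat.exists_eq_add_one_of_ne_zero he.ne'
    have h := card_unimodularPair_zmod_prime_pow hp e
    rw [Nat.primeFactors_prime_pow he.ne' hp, Nat.totient_prime_pow_succ hp, Finset.prod_singleton,
      Finset.prod_singleton]
    zify [hp.one_le] at h ⊢
    linear_combination (p : ℤ) * h
  | zero =>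
    have : Infinite (UnimodularPair (ZMod 0)) :=
      .of_injective (fun c => ⟨(1, c), isCoprime_one_left⟩) fun c d h => congrArg (·.1.2) h
    simp
  | one =>
    have : Nonempty (UnimodularPair (ZMod 1)) := ⟨⟨(1, 1), isCoprime_one_left⟩⟩
    simp
  | coprime a b ha hb hab iha ihb =>
    rw [card_unimodularPair_zmod_mul hab, Nat.totient_mul hab,
      Nat.primeFactors_mul (by omega) (by omega), Finset.prod_union hab.disjoint_primeFactors,
      Finset.prod_union hab.disjoint_primeFactors]
    linear_combination (∏ p ∈ b.primeFactors, p) * Nat.card (UnimodularPair (ZMod b)) * iha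
      + a.totient * (a * ∏ p ∈ a.primeFactors, (p + 1)) * ihb

namespace UnimodularPair

variable {R : Type*} [CommRing R]

theorem smul_eq_zero_iff (v : UnimodularPair R) {c : R} : c • v.1 = 0 ↔ c = 0 := by
  refine ⟨fun h => ?_, fun h => by rw [h, zero_smul]⟩
  obtain ⟨a, b, hab⟩ := v.2
  have h₁ : c * v.1.1 = 0 := congrArg Prod.fst h
  have h₂ : c * v.1.2 = 0 := congrArg Prod.snd h
  linear_combination -c * hab + a * h₁ + b * h₂

instance : SMul Rˣ (UnimodularPair R) where
  smul c v := ⟨c • v.1, (isCoprime_mul_unit_left c.isUnit _ _).mpr v.2⟩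

theorem units_smul_left_injective (v : UnimodularPair R) :
    Function.Injective fun c : Rˣ => c • v := fun c d h => by
  rw [Units.ext_iff, ← sub_eq_zero, ← v.smul_eq_zero_iff, sub_smul, sub_eq_zero]
  exact congrArg Subtype.val h

theorem span_eq_span_iff (v w : UnimodularPair R) :
    R ∙ v.1 = R ∙ w.1 ↔ ∃ c : Rˣ, c • v = w := by
  refine ⟨fun h => ?_, ?_⟩
  · obtain ⟨a, ha⟩ := Submodule.mem_span_singleton.mp (h ▸ Submodule.mem_span_singleton_self w.1)
    obtain ⟨b, hb⟩ := Submodule.mem_span_singleton.mp (h ▸ Submodule.mem_span_singleton_self v.1)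
    have hab : b * a = 1 := by
      rw [← sub_eq_zero, ← v.smul_eq_zero_iff, sub_smul, mul_smul, ha, hb, one_smul, sub_self]
    exact ⟨(IsUnit.of_mul_eq_one b (by rwa [mul_comm])).unit, Subtype.ext ha⟩
  · rintro ⟨c, rfl⟩
    exact (Submodule.span_singleton_smul_eq c.isUnit v.1).symm

theorem card_range_span_mul_card_units :
    Nat.card (Set.range fun v : UnimodularPair R => R ∙ v.1) * Nat.card Rˣ =
      Nat.card (UnimodularPair R) := by
  refine (Nat.card_eq_card_range_mul _ fun v => ?_).symm
  refine (Equiv.ofBijective (fun c : Rˣ => ⟨c • v, ((span_eq_span_iff v _).mpr ⟨c, rfl⟩).symm⟩)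
    ⟨fun c d h => ?_, ?_⟩).symm
  · exact v.units_smul_left_injective (congrArg Subtype.val h)
  · rintro ⟨w, hw⟩
    obtain ⟨c, rfl⟩ := (span_eq_span_iff v w).mp hw.symm
    exact ⟨c, rfl⟩

end UnimodularPair

namespace ZMod

theorem castHom_eq_zero_iff_natCast_dvd {d m : ℕ} (h : d ∣ m) (x : ZMod m) :
    castHom h (ZMod d) x = 0 ↔ (d : ZMod m) ∣ x := by
  refine ⟨fun hx => ?_, fun ⟨s, hs⟩ => by rw [hs, map_mul, map_natCast, natCast_self, zero_mul]⟩
  obtain ⟨X, rfl⟩ := intCast_surjective x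
  rw [map_intCast, intCast_zmod_eq_zero_iff_dvd] at hx
  obtain ⟨t, rfl⟩ := hx
  exact ⟨t, by push_cast; rfl⟩

theorem natCast_mul_eq_zero_iff {n k : ℕ} (hn : n ≠ 0) (x : ZMod (n * k)) :
    (n : ZMod (n * k)) * x = 0 ↔ castHom (dvd_mul_left k n) (ZMod k) x = 0 := by
  obtain ⟨X, rfl⟩ := intCast_surjective x
  rw [map_intCast, ← Int.cast_natCast, ← Int.cast_mul, intCast_zmod_eq_zero_iff_dvd,
    intCast_zmod_eq_zero_iff_dvd, Nat.cast_mul]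
  exact mul_dvd_mul_iff_left (by exact_mod_cast hn)

theorem exists_isUnit_add_mul_of_isCoprime {k : ℕ} [NeZero k] {a b : ZMod k}
    (h : IsCoprime a b) : ∃ t, IsUnit (a + t * b) := by
  -- Write b = u d with u a unit and d ∣ k. Then a is a unit mod d, and a unit U of ZMod k lifting
  -- it satisfies U - a ∈ (d) = (b).
  obtain ⟨d, hd, u, hu, rfl⟩ := eq_unit_mul_divisor b
  have ha : IsUnit (castHom hd (ZMod d) a) :=
    isCoprime_zero_right.mp (by simpa using h.of_mul_right_right.map (castHom hd (ZMod d)))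
  obtain ⟨U, hU⟩ := unitsMap_surjective hd ha.unit
  have hUa : castHom hd (ZMod d) (U - a) = 0 := by
    rw [map_sub, sub_eq_zero]
    simpa [unitsMap_def] using congrArg Units.val hU
  obtain ⟨s, hs⟩ := (castHom_eq_zero_iff_natCast_dvd hd _).mp hUa
  refine ⟨s * ↑hu.unit⁻¹, ?_⟩
  have : a + s * ↑hu.unit⁻¹ * (u * d) = U := by
    linear_combination (s * d) * hu.val_inv_mul - hs
  exact this ▸ U.isUnit

end ZMod

theorem UnimodularPair.map_castHom_surjective {d m : ℕ} [NeZero m] (h : d ∣ m) :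
    Function.Surjective (UnimodularPair.map (ZMod.castHom h (ZMod d))) := by
  -- Lift the unit a + t b to a unit U mod m; then U lies in the ideal spanned by U - T B and B.
  rintro ⟨⟨a, b⟩, hab⟩
  have : NeZero d := ⟨fun hd => NeZero.ne m (Nat.eq_zero_of_zero_dvd (hd ▸ h))⟩
  obtain ⟨t, ht⟩ := ZMod.exists_isUnit_add_mul_of_isCoprime hab
  obtain ⟨U, hU⟩ := ZMod.unitsMap_surjective h ht.unit
  obtain ⟨B, rfl⟩ := ZMod.castHom_surjective h b
  obtain ⟨T, rfl⟩ := ZMod.castHom_surjective h t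
  have hUa : ZMod.castHom h (ZMod d) U =
      a + ZMod.castHom h (ZMod d) T * ZMod.castHom h (ZMod d) B := by
    simpa [ZMod.unitsMap_def] using congrArg Units.val hU
  refine ⟨⟨(U - T * B, B), ⟨↑U⁻¹, ↑U⁻¹ * T, by linear_combination U.inv_mul⟩⟩, ?_⟩
  ext
  · change ZMod.castHom h (ZMod d) (U - T * B) = a
    rw [map_sub, map_mul, hUa, add_sub_cancel_right]
  · rfl

section NatCastSmul

variable {n k : ℕ}

local notation "red" => ZMod.castHom (dvd_mul_left k n) (ZMod k)

theorem natCast_smul_mem_span_singleton_iff (hn : n ≠ 0) (v w : ZMod (n * k) × ZMod (n * k)) :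
    (n : ZMod (n * k)) • w ∈ ZMod (n * k) ∙ ((n : ZMod (n * k)) • v) ↔
      (red w.1, red w.2) ∈ ZMod k ∙ (red v.1, red v.2) := by
  simp only [Submodule.mem_span_singleton, Prod.ext_iff, Prod.smul_fst, Prod.smul_snd,
    smul_eq_mul]
  constructor
  · rintro ⟨t, h₁, h₂⟩
    refine ⟨red t, ?_, ?_⟩
    · rw [← map_mul, eq_comm, ← sub_eq_zero, ← map_sub, ← ZMod.natCast_mul_eq_zero_iff hn]
      linear_combination -h₁
    · rw [← map_mul, eq_comm, ← sub_eq_zero, ← map_sub, ← ZMod.natCast_mul_eq_zero_iff hn]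
      linear_combination -h₂
  · rintro ⟨s, h₁, h₂⟩
    obtain ⟨t, rfl⟩ := ZMod.castHom_surjective (dvd_mul_left k n) s
    rw [← map_mul, eq_comm, ← sub_eq_zero, ← map_sub, ← ZMod.natCast_mul_eq_zero_iff hn] at h₁ h₂
    exact ⟨t, by linear_combination -h₁, by linear_combination -h₂⟩

theorem card_range_span_natCast_smul (hn : n ≠ 0) (hk : k ≠ 0) :
    Nat.card (Set.range fun v : UnimodularPair (ZMod (n * k)) =>
        ZMod (n * k) ∙ ((n : ZMod (n * k)) • v.1)) =
      Nat.card (Set.range fun w : UnimodularPair (ZMod k) => ZMod k ∙ w.1) := by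
  have : NeZero (n * k) := ⟨mul_ne_zero hn hk⟩
  have span_eq_iff (v w : UnimodularPair (ZMod (n * k))) :
      ZMod (n * k) ∙ ((n : ZMod (n * k)) • v.1) = ZMod (n * k) ∙ ((n : ZMod (n * k)) • w.1) ↔
        ZMod k ∙ (v.map red).1 = ZMod k ∙ (w.map red).1 := by
    simp only [le_antisymm_iff, Submodule.span_singleton_le_iff_mem,
      natCast_smul_mem_span_singleton_iff hn]
    rfl
  rw [← Nat.card_quot_eq_card_range _ fun _ _ => Iff.rfl, Nat.card_quot_eq_card_range _ span_eq_iff]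
  exact congrArg (fun s : Set _ => Nat.card s)
    ((UnimodularPair.map_castHom_surjective _).range_comp fun w => ZMod k ∙ w.1)

end NatCastSmul

section PairCombination

variable (R : Type*) {M : Type*} [Ring R] [AddCommGroup M] [Module R M]

def pairCombination (q : M × M) : R × R →ₗ[R] M :=
  (LinearMap.toSpanSingleton R M q.1).coprod (LinearMap.toSpanSingleton R M q.2)

variable {R}

@[simp]
theorem pairCombination_apply (q : M × M) (z : R × R) :
    pairCombination R q z = z.1 • q.1 + z.2 • q.2 := rfl

theorem range_pairCombination (q : M × M) :
    LinearMap.range (pairCombination R q) = Submodule.span R {q.1, q.2} := by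
  rw [pairCombination, LinearMap.range_coprod, ← LinearMap.span_singleton_eq_range,
    ← LinearMap.span_singleton_eq_range, Submodule.span_insert]

theorem pairCombination_eq_self (f : R × R →ₗ[R] M) : pairCombination R (f (1, 0), f (0, 1)) = f :=
  LinearMap.prod_ext (LinearMap.ext_ring (by simp)) (LinearMap.ext_ring (by simp))

theorem pairCombination_comp_eq_iff (σ : M →ₗ[R] M) (x y : M × M) :
    σ ∘ₗ pairCombination R x = pairCombination R y ↔ σ x.1 = y.1 ∧ σ x.2 = y.2 := by
  refine ⟨fun h => ⟨?_, ?_⟩, fun ⟨h₁, h₂⟩ => ?_⟩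
  · simpa using LinearMap.congr_fun h (1, 0)
  · simpa using LinearMap.congr_fun h (0, 1)
  · ext <;> simp [h₁, h₂]

theorem LinearMap.exists_linearEquiv_comp_eq_iff_ker_eq {N : Type*} [AddCommGroup N] [Module R N]
    {f g : N →ₗ[R] M} (hf : Function.Surjective f) (hg : Function.Surjective g) :
    (∃ σ : M ≃ₗ[R] M, σ ∘ₗ f = g) ↔ LinearMap.ker f = LinearMap.ker g := by
  refine ⟨fun ⟨σ, hσ⟩ => hσ ▸ (LinearEquiv.ker_comp σ f).symm, fun h => ?_⟩
  refine ⟨(f.quotKerEquivOfSurjective hf).symm.trans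
    ((Submodule.quotEquivOfEq _ _ h).trans (g.quotKerEquivOfSurjective hg)), ?_⟩
  ext z
  simp

end PairCombination

section ZModModule

variable {m : ℕ} {M : Type*} [AddCommGroup M] [Module (ZMod m) M]

theorem AddSubgroup.closure_eq_top_iff_span_zmod_eq_top (s : Set M) :
    AddSubgroup.closure s = ⊤ ↔ Submodule.span (ZMod m) s = ⊤ := by
  have : AddSubgroup.toZModSubmodule m (AddSubgroup.closure s) = Submodule.span (ZMod m) s :=
    le_antisymm ((AddSubgroup.closure_le (Submodule.span (ZMod m) s).toAddSubgroup).mpr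
      Submodule.subset_span) (Submodule.span_le.mpr AddSubgroup.subset_closure)
  rw [AddSubgroup.eq_top_iff', Submodule.eq_top_iff', ← this]
  rfl

theorem card_addAut_orbits_eq_card_kernels :
    Nat.card (Quot (fun x y : {q : M × M // AddSubgroup.closure {q.1, q.2} = ⊤} =>
        ∃ σ : AddAut M, σ x.1.1 = y.1.1 ∧ σ x.1.2 = y.1.2)) =
      Nat.card {K : Submodule (ZMod m) (ZMod m × ZMod m) |
        ∃ f : ZMod m × ZMod m →ₗ[ZMod m] M, Function.Surjective f ∧ LinearMap.ker f = K} := by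
  have surjective_iff (q : M × M) :
      AddSubgroup.closure {q.1, q.2} = ⊤ ↔ Function.Surjective (pairCombination (ZMod m) q) := by
    rw [← LinearMap.range_eq_top, range_pairCombination,
      AddSubgroup.closure_eq_top_iff_span_zmod_eq_top (m := m)]
  rw [Nat.card_quot_eq_card_range (fun q => LinearMap.ker (pairCombination (ZMod m) q.1))
    fun x y => ?_]
  · congr
    ext K
    refine ⟨fun ⟨q, hq⟩ => ⟨_, (surjective_iff q.1).mp q.2, hq⟩, fun ⟨f, hf, hK⟩ => ?_⟩
    refine ⟨⟨(f (1, 0), f (0, 1)), (surjective_iff _).mpr ?_⟩, ?_⟩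
    · rwa [pairCombination_eq_self]
    · change LinearMap.ker (pairCombination _ (f (1, 0), f (0, 1))) = K
      rwa [pairCombination_eq_self]
  · rw [← LinearMap.exists_linearEquiv_comp_eq_iff_ker_eq ((surjective_iff _).mp x.2)
      ((surjective_iff _).mp y.2)]
    exact ⟨fun ⟨σ, h⟩ =>
        ⟨σ.toLinearEquiv (ZMod.map_smul σ), (pairCombination_comp_eq_iff _ _ _).mpr h⟩,
      fun ⟨σ, h⟩ => ⟨σ.toAddEquiv, (pairCombination_comp_eq_iff (σ : M →ₗ[ZMod m] M) _ _).mp h⟩⟩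

end ZModModule

section Functional

variable {R : Type*} [CommRing R]

theorem LinearMap.apply_eq_fst_smul_add_snd_smul {M : Type*} [AddCommGroup M] [Module R M]
    (f : R × R →ₗ[R] M) (z : R × R) : f z = z.1 • f (1, 0) + z.2 • f (0, 1) := by
  conv_lhs => rw [← pairCombination_eq_self f]
  rfl

theorem LinearMap.isCoprime_of_surjective {g : R × R →ₗ[R] R} (hg : Function.Surjective g) :
    IsCoprime (g (1, 0)) (g (0, 1)) := by
  obtain ⟨z, hz⟩ := hg 1
  exact ⟨z.1, z.2, (g.apply_eq_fst_smul_add_snd_smul z).symm.trans hz⟩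

theorem LinearMap.ker_eq_span_of_isCoprime {g : R × R →ₗ[R] R}
    (h : IsCoprime (g (1, 0)) (g (0, 1))) : LinearMap.ker g = R ∙ (-g (0, 1), g (1, 0)) := by
  obtain ⟨a, b, hab⟩ := h
  ext z
  rw [LinearMap.mem_ker, Submodule.mem_span_singleton, g.apply_eq_fst_smul_add_snd_smul]
  simp only [smul_eq_mul, Prod.ext_iff, Prod.smul_fst, Prod.smul_snd]
  constructor
  · intro hz
    exact ⟨a * z.2 - b * z.1, by linear_combination z.1 * hab - a * hz,
      by linear_combination z.2 * hab - b * hz⟩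
  · rintro ⟨t, h₁, h₂⟩
    linear_combination (-g (1, 0)) * h₁ - g (0, 1) * h₂

end Functional

section Kernels

variable {n m : ℕ} [Fact (n ∣ m)]

-- Not a global instance: for n = m it would compete with the module structure of ZMod m on itself.
abbrev ZMod.moduleOfDvd : Module (ZMod m) (ZMod n) := (ZMod.castHom Fact.out (ZMod n)).toModule

attribute [local instance] ZMod.moduleOfDvd

local notation "red" => ZMod.castHom (Fact.out : n ∣ m) (ZMod n)

theorem ZMod.smul_eq_castHom_mul (r : ZMod m) (x : ZMod n) : r • x = red r * x := rfl

theorem ker_eq_span_natCast_smul {f : ZMod m × ZMod m →ₗ[ZMod m] ZMod n × ZMod m}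
    (hf : Function.Surjective f) :
    LinearMap.ker f = ZMod m ∙ ((n : ZMod m) • (-(f (0, 1)).2, (f (1, 0)).2)) := by
  -- The second coordinate g of f is a surjective functional, so ker g is spanned by w; on ker g,
  -- f is t • w ↦ (t (f w).1, 0) and surjectivity makes (f w).1 a unit of ZMod n.
  set g := LinearMap.snd (ZMod m) (ZMod n) (ZMod m) ∘ₗ f
  set w : ZMod m × ZMod m := (-(f (0, 1)).2, (f (1, 0)).2)
  have ker_g : LinearMap.ker g = ZMod m ∙ w :=
    LinearMap.ker_eq_span_of_isCoprime (LinearMap.isCoprime_of_surjective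
      (Prod.snd_surjective.comp hf))
  have mem_of_snd {z} (hz : (f z).2 = 0) : ∃ t : ZMod m, t • w = z :=
    Submodule.mem_span_singleton.mp (ker_g ▸ hz)
  have hw : w ∈ LinearMap.ker g := ker_g ▸ Submodule.mem_span_singleton_self w
  have fw : f w = ((f w).1, 0) := Prod.ext rfl hw
  have fst_smul (t : ZMod m) : (f (t • w)).1 = red t * (f w).1 := by
    rw [map_smul, Prod.smul_fst, ZMod.smul_eq_castHom_mul]
  obtain ⟨c, hc⟩ : ∃ c : ZMod m, red c * (f w).1 = 1 := by
    obtain ⟨z, hz⟩ := hf (1, 0)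
    obtain ⟨c, rfl⟩ := mem_of_snd (congrArg Prod.snd hz)
    exact ⟨c, (fst_smul c).symm.trans (congrArg Prod.fst hz)⟩
  refine le_antisymm (fun z hz => ?_) ((Submodule.span_singleton_le_iff_mem _ _).mpr ?_)
  · obtain ⟨t, rfl⟩ := mem_of_snd (congrArg Prod.snd hz)
    have h₁ : red t * (f w).1 = 0 := (fst_smul t).symm.trans (congrArg Prod.fst hz)
    obtain ⟨s, rfl⟩ := (ZMod.castHom_eq_zero_iff_natCast_dvd _ t).mp
      (by linear_combination -(red t) * hc + red c * h₁)
    exact Submodule.mem_span_singleton.mpr ⟨s, by rw [smul_smul, mul_comm]⟩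
  · rw [LinearMap.mem_ker, map_smul, fw]
    ext <;> simp [ZMod.smul_eq_castHom_mul]

theorem exists_surjective_ker_eq_span (v : UnimodularPair (ZMod m)) :
    ∃ f : ZMod m × ZMod m →ₗ[ZMod m] ZMod n × ZMod m,
      Function.Surjective f ∧ LinearMap.ker f = ZMod m ∙ ((n : ZMod m) • v.1) := by
  obtain ⟨a, b, hab⟩ := v.2
  set f := pairCombination (ZMod m) ((red a, -v.1.2), (red b, v.1.1))
  have hf : Function.Surjective f := by
    rintro ⟨x, y⟩
    obtain ⟨X, rfl⟩ := ZMod.castHom_surjective (Fact.out : n ∣ m) x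
    refine ⟨(X * v.1.1 - y * b, X * v.1.2 + y * a), Prod.ext ?_ ?_⟩
    · simp only [f, pairCombination_apply, Prod.fst_add, Prod.smul_fst,
        ZMod.smul_eq_castHom_mul, ← map_mul, ← map_add]
      congr 1
      linear_combination X * hab
    · simp only [f, pairCombination_apply, Prod.snd_add, Prod.smul_snd, smul_eq_mul]
      linear_combination y * hab
  refine ⟨f, hf, ?_⟩
  rw [ker_eq_span_natCast_smul hf]
  have hw : (-(f (0, 1)).2, (f (1, 0)).2) = -v.1 := by ext <;> simp [f]
  rw [hw, smul_neg, ← neg_one_smul (ZMod m), Submodule.span_singleton_smul_eq isUnit_one.neg]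

theorem setOf_ker_surjective_eq_range_span :
    {K | ∃ f : ZMod m × ZMod m →ₗ[ZMod m] ZMod n × ZMod m,
        Function.Surjective f ∧ LinearMap.ker f = K} =
      Set.range fun v : UnimodularPair (ZMod m) => ZMod m ∙ ((n : ZMod m) • v.1) := by
  ext K
  constructor
  · rintro ⟨f, hf, rfl⟩
    exact ⟨⟨_, (LinearMap.isCoprime_of_surjective (g := LinearMap.snd _ _ _ ∘ₗ f)
      (Prod.snd_surjective.comp hf)).symm.neg_left⟩, (ker_eq_span_natCast_smul hf).symm⟩
  · rintro ⟨v, rfl⟩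
    exact exists_surjective_ker_eq_span v

theorem card_addAut_orbits_zmod_prod :
    Nat.card (Quot (fun x y : {q : (ZMod n × ZMod m) × (ZMod n × ZMod m) //
          AddSubgroup.closure ({q.1, q.2} : Set (ZMod n × ZMod m)) = ⊤} =>
        ∃ σ : AddAut (ZMod n × ZMod m), σ x.1.1 = y.1.1 ∧ σ x.1.2 = y.1.2)) =
      Nat.card (Set.range fun v : UnimodularPair (ZMod m) => ZMod m ∙ ((n : ZMod m) • v.1)) := by
  rw [card_addAut_orbits_eq_card_kernels (m := m), setOf_ker_surjective_eq_range_span]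

end Kernels

/-- For `1 ≤ n ≤ m` with `n ∣ m`, the number `N` of orbits of `Aut(G)` on
generating pairs of `G = ℤ_n ⊕ ℤ_m` equals the Dedekind totient `ψ(m/n)`; equivalently
`N · ∏_{p ∣ m/n} p = (m/n) · ∏_{p ∣ m/n} (p + 1)` (products over prime divisors). -/
theorem stmt13 (n m : ℕ) (h1 : 1 ≤ n) (hle : n ≤ m) (hnm : n ∣ m) :
    (Nat.card (Quot (fun x y : {q : (ZMod n × ZMod m) × (ZMod n × ZMod m) //
          AddSubgroup.closure ({q.1, q.2} : Set (ZMod n × ZMod m)) = ⊤} =>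
        ∃ σ : AddAut (ZMod n × ZMod m), σ x.1.1 = y.1.1 ∧ σ x.1.2 = y.1.2))) *
        ∏ p ∈ (m / n).primeFactors, p =
      (m / n) * ∏ p ∈ (m / n).primeFactors, (p + 1) := by
  obtain ⟨k, rfl⟩ := hnm
  have hn : n ≠ 0 := by omega
  have hk : k ≠ 0 := by rintro rfl; omega
  have : Fact (n ∣ n * k) := ⟨dvd_mul_right n k⟩
  have : NeZero k := ⟨hk⟩
  rw [Nat.mul_div_cancel_left k (by omega), card_addAut_orbits_zmod_prod,
    card_range_span_natCast_smul hn hk]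
  refine Nat.eq_of_mul_eq_mul_left (Nat.totient_pos.mpr (Nat.pos_of_ne_zero hk)) ?_
  rw [← card_unimodularPair_zmod_mul_prod_primeFactors,
    ← UnimodularPair.card_range_span_mul_card_units, Nat.card_eq_fintype_card (α := (ZMod k)ˣ),
    ZMod.card_units_eq_totient]
  ring
end

section
/- Let 1 ≤ n ≤ m be integers with n dividing m, and let G = ℤ_n ⊕ ℤ_m. Then the number of orbits of Aut(G) acting componentwise on the set of transpositional generating pairs of G equals the number of solutions e ∈ ℤ_{m/n} of the congruence e² ≡ 1 (mod m/n). -/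
namespace Stmt14Aux

variable {n m k : ℕ}

lemma msmul_zero (hnm : n ∣ m) (v : ZMod n × ZMod m) : (m : ℤ) • v = 0 := by
  ext
  · show (m : ℤ) • v.1 = 0
    rw [zsmul_eq_mul]
    have : ((m : ℤ) : ZMod n) = 0 := by
      rw [Int.cast_natCast, ZMod.natCast_eq_zero_iff]; exact hnm
    rw [this, zero_mul]
  · show (m : ℤ) • v.2 = 0
    rw [zsmul_eq_mul]
    have : ((m : ℤ) : ZMod m) = 0 := by
      rw [Int.cast_natCast, ZMod.natCast_self]
    rw [this, zero_mul]

lemma ord_g (hnm : n ∣ m) {g h : ZMod n × ZMod m}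
    (hgen : AddSubgroup.closure ({g, h} : Set (ZMod n × ZMod m)) = ⊤)
    (τ : AddAut (ZMod n × ZMod m)) (hτ : τ g = h) :
    addOrderOf g = m := by
  have hoh : addOrderOf h = addOrderOf g := by
    rw [← hτ]
    exact addOrderOf_injective τ.toAddMonoidHom τ.injective g
  set r := addOrderOf g with hr
  have hrg : (r : ℤ) • g = 0 := by
    rw [← addOrderOf_dvd_iff_zsmul_eq_zero]
  have hrh : (r : ℤ) • h = 0 := by
    rw [← addOrderOf_dvd_iff_zsmul_eq_zero, hoh]
  have hall : ∀ v : ZMod n × ZMod m, (r : ℤ) • v = 0 := by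
    intro v
    have hv : v ∈ AddSubgroup.closure ({g, h} : Set (ZMod n × ZMod m)) := by
      rw [hgen]; trivial
    obtain ⟨a, b, hab⟩ := AddSubgroup.mem_closure_pair.mp hv
    rw [← hab, smul_add, smul_comm (r:ℤ) a, smul_comm (r:ℤ) b, hrg, hrh,
      smul_zero, smul_zero, add_zero]
  have h1 := hall (0, 1)
  have h2 : ((r : ℤ) : ZMod m) = 0 := by
    have := congrArg Prod.snd h1
    simpa [zsmul_eq_mul] using this
  have hmr : m ∣ r := by
    rwa [ZMod.intCast_zmod_eq_zero_iff_dvd, Int.natCast_dvd_natCast] at h2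
  have hrm : r ∣ m := by
    have := msmul_zero hnm g
    rw [← addOrderOf_dvd_iff_zsmul_eq_zero] at this
    exact_mod_cast this
  exact Nat.dvd_antisymm hrm hmr

lemma zsmul_ng (hn : 0 < n) (hk : m = n * k) {g : ZMod n × ZMod m}
    (hg : addOrderOf g = m) (z : ℤ) :
    z • ((n : ℤ) • g) = 0 ↔ (k : ℤ) ∣ z := by
  rw [← mul_smul]
  rw [← addOrderOf_dvd_iff_zsmul_eq_zero, hg]
  constructor
  · rintro ⟨c, hc⟩
    refine ⟨c, ?_⟩
    have hn' : (n : ℤ) ≠ 0 := by exact_mod_cast hn.ne'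
    have : z * n = k * c * n := by
      rw [hc]
      push_cast [hk]
      ring
    exact mul_right_cancel₀ hn' this
  · rintro ⟨c, hc⟩
    refine ⟨c, ?_⟩
    push_cast [hk]
    rw [hc]; ring

lemma exists_dlog (hn : 0 < n) (hkpos : 0 < k) (hm : m = n * k) (a b : ZMod m)
    (ha : ∀ z : ℤ, z • a = 0 ↔ (k : ℤ) ∣ z) (hb : (k : ℤ) • b = 0) :
    ∃ e : ℤ, b = e • a := by
  haveI : NeZero m := ⟨by rw [hm]; positivity⟩
  have cast_val : ∀ x : ZMod m, ((x.val : ℤ) : ZMod m) = x := by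
    intro x
    rw [Int.cast_natCast, ZMod.natCast_val, ZMod.cast_id]
  have smul_cast : ∀ (z : ℤ) (x : ZMod m), z • x = ((z * x.val : ℤ) : ZMod m) := by
    intro z x
    rw [zsmul_eq_mul, Int.cast_mul, cast_val]
  have dvd_of_smul_zero : ∀ x : ZMod m, (k : ℤ) • x = 0 → n ∣ x.val := by
    intro x hx
    rw [smul_cast, ZMod.intCast_zmod_eq_zero_iff_dvd] at hx
    have : (n : ℤ) * k ∣ k * x.val := by
      have : ((n * k : ℕ) : ℤ) ∣ (k : ℤ) * x.val := by rw [← hm]; exact_mod_cast hx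
      exact_mod_cast this
    have h2 : (n : ℤ) ∣ x.val := by
      rcases this with ⟨c, hc⟩
      refine ⟨c, ?_⟩
      have hk' : (k : ℤ) ≠ 0 := by exact_mod_cast hkpos.ne'
      apply mul_left_cancel₀ hk'
      rw [hc]; ring
    exact_mod_cast h2
  have hka : (k : ℤ) • a = 0 := (ha k).mpr dvd_rfl
  obtain ⟨s, hs⟩ := dvd_of_smul_zero a hka
  obtain ⟨t, ht⟩ := dvd_of_smul_zero b hb
  have hcop : Nat.Coprime s k := by
    set d := Nat.gcd s k with hd
    obtain ⟨s', hs'⟩ := Nat.gcd_dvd_left s k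
    obtain ⟨k', hk'⟩ := Nat.gcd_dvd_right s k
    have hdpos : 0 < d := Nat.gcd_pos_of_pos_right _ hkpos
    have hzero : ((k' : ℤ)) • a = 0 := by
      rw [smul_cast, ZMod.intCast_zmod_eq_zero_iff_dvd]
      have : (k' : ℤ) * a.val = (m : ℤ) * s' := by
        have h1 : (a.val : ℤ) = n * s := by exact_mod_cast hs
        have h2 : (s : ℤ) = d * s' := by exact_mod_cast hs'
        have h3 : (k : ℤ) = d * k' := by exact_mod_cast hk'
        have h4 : (m : ℤ) = n * k := by exact_mod_cast hm
        rw [h1, h2, h4, h3]; ring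
      rw [this]
      exact Dvd.intro _ rfl
    have hdvd : (k : ℤ) ∣ k' := (ha _).mp hzero
    have hdvd' : k ∣ k' := by exact_mod_cast hdvd
    have hk'pos : 0 < k' := by
      rcases Nat.eq_zero_or_pos k' with h | h
      · rw [h, mul_zero] at hk'; omega
      · exact h
    have : k ≤ k' := Nat.le_of_dvd hk'pos hdvd'
    have : d = 1 := by nlinarith [hk']
    exact this
  have hbez := Nat.gcd_eq_gcd_ab s k
  rw [hcop] at hbez
  refine ⟨(t : ℤ) * Nat.gcdA s k, ?_⟩
  have key : (t : ℤ) - ((t : ℤ) * Nat.gcdA s k) * s = k * (t * Nat.gcdB s k) := by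
    have : (1 : ℤ) = s * Nat.gcdA s k + k * Nat.gcdB s k := by exact_mod_cast hbez
    nlinarith [this]
  rw [smul_cast]
  rw [← sub_eq_zero, ← cast_val b, ← Int.cast_sub, ZMod.intCast_zmod_eq_zero_iff_dvd]
  have : (b.val : ℤ) - ((t : ℤ) * Nat.gcdA s k) * a.val = (m : ℤ) * (t * Nat.gcdB s k) := by
    have hsv : (a.val : ℤ) = n * s := by exact_mod_cast hs
    have htv : (b.val : ℤ) = n * t := by exact_mod_cast ht
    rw [hsv, htv]
    push_cast [hm]
    nlinarith [key]
  rw [this]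
  exact Dvd.intro _ rfl

lemma ker_iff (hn : 0 < n) (hm : 0 < m) {g h : ZMod n × ZMod m} {e : ℤ}
    (hgen : AddSubgroup.closure ({g, h} : Set (ZMod n × ZMod m)) = ⊤)
    (hg : addOrderOf g = m)
    (hrel : (n : ℤ) • h = e • ((n : ℤ) • g)) (z₁ z₂ : ℤ) :
    z₁ • g + z₂ • h = 0 ↔ ((n : ℤ) ∣ z₂ ∧ (m : ℤ) ∣ z₁ + e * z₂) := by
  haveI : NeZero n := ⟨hn.ne'⟩
  haveI : NeZero m := ⟨hm.ne'⟩
  have hred : ∀ w : ℤ, ((n : ℤ) * w) • h = (e * (n * w)) • g := by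
    intro w
    rw [mul_comm (n : ℤ) w, mul_smul, hrel, ← mul_smul, ← mul_smul]
    ring_nf
  constructor
  · intro hzero
    set Z := AddSubgroup.zmultiples g with hZ
    have hcardZ : Nat.card Z = m := by rw [Nat.card_zmultiples, hg]
    have hcardG : Nat.card (ZMod n × ZMod m) = n * m := by
      rw [Nat.card_prod, Nat.card_zmod, Nat.card_zmod]
    have hcardQ : Nat.card ((ZMod n × ZMod m) ⧸ Z) = n := by
      have := AddSubgroup.card_eq_card_quotient_mul_card_addSubgroup Z
      rw [hcardG, hcardZ] at this
      exact Nat.eq_of_mul_eq_mul_right hm this.symm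
    set mk := QuotientAddGroup.mk' Z with hmk
    have hmkg : mk g = 0 := by
      rw [QuotientAddGroup.mk'_apply, QuotientAddGroup.eq_zero_iff]
      exact AddSubgroup.mem_zmultiples g
    have htop : AddSubgroup.zmultiples (mk h) = ⊤ := by
      rw [eq_top_iff]
      intro q _
      obtain ⟨x, hx⟩ := QuotientAddGroup.mk'_surjective Z q
      have hxmem : x ∈ AddSubgroup.closure ({g, h} : Set (ZMod n × ZMod m)) := by
        rw [hgen]; trivial
      obtain ⟨a, b, hab⟩ := AddSubgroup.mem_closure_pair.mp hxmem
      refine ⟨b, ?_⟩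
      show b • (mk h) = q
      rw [← hx, ← hab, map_add, map_zsmul, map_zsmul, hmkg, smul_zero, zero_add]
    have hordQ : addOrderOf (mk h) = n := by
      have h1 : Nat.card (AddSubgroup.zmultiples (mk h)) = addOrderOf (mk h) :=
        Nat.card_zmultiples _
      rw [htop] at h1
      have h2 : Nat.card (⊤ : AddSubgroup ((ZMod n × ZMod m) ⧸ Z)) =
          Nat.card ((ZMod n × ZMod m) ⧸ Z) := Nat.card_congr AddSubgroup.topEquiv.toEquiv
      omega
    have hz2 : (n : ℤ) ∣ z₂ := by
      rw [← hordQ]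
      rw [addOrderOf_dvd_iff_zsmul_eq_zero]
      have := congrArg mk hzero
      rw [map_add, map_zsmul, map_zsmul, hmkg, smul_zero, zero_add, map_zero] at this
      exact this
    refine ⟨hz2, ?_⟩
    obtain ⟨w, hw⟩ := hz2
    have : (z₁ + e * z₂) • g = 0 := by
      have h2 : z₂ • h = (e * z₂) • g := by rw [hw]; exact hred w
      rw [add_smul, ← h2]
      exact hzero
    rw [← addOrderOf_dvd_iff_zsmul_eq_zero, hg] at this
    exact this
  · rintro ⟨⟨w, hw⟩, ⟨c, hc⟩⟩
    have h2 : z₂ • h = (e * z₂) • g := by rw [hw]; exact hred w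
    have heq : z₁ • g + z₂ • h = (z₁ + e * z₂) • g := by
      rw [add_smul, ← h2]
    have hmg : (m : ℤ) • g = 0 := by
      rw [← addOrderOf_dvd_iff_zsmul_eq_zero, hg]
    rw [heq, hc, mul_comm, mul_smul, hmg, smul_zero]

lemma exists_aut {G : Type*} [AddCommGroup G] (g h g' h' : G)
    (hgen : AddSubgroup.closure ({g, h} : Set G) = ⊤)
    (hgen' : AddSubgroup.closure ({g', h'} : Set G) = ⊤)
    (hker : ∀ z₁ z₂ : ℤ, z₁ • g + z₂ • h = 0 ↔ z₁ • g' + z₂ • h' = 0) :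
    ∃ σ : G ≃+ G, σ g = g' ∧ σ h = h' := by
  have rep : ∀ x : G, ∃ p : ℤ × ℤ, p.1 • g + p.2 • h = x := by
    intro x
    have hx : x ∈ AddSubgroup.closure ({g, h} : Set G) := by rw [hgen]; trivial
    obtain ⟨a, b, hab⟩ := AddSubgroup.mem_closure_pair.mp hx
    exact ⟨(a, b), hab⟩
  have rep' : ∀ x : G, ∃ p : ℤ × ℤ, p.1 • g' + p.2 • h' = x := by
    intro x
    have hx : x ∈ AddSubgroup.closure ({g', h'} : Set G) := by rw [hgen']; trivial
    obtain ⟨a, b, hab⟩ := AddSubgroup.mem_closure_pair.mp hx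
    exact ⟨(a, b), hab⟩
  choose P hP using rep
  choose P' hP' using rep'
  set F : G → G := fun x => (P x).1 • g' + (P x).2 • h' with hF
  set F' : G → G := fun x => (P' x).1 • g + (P' x).2 • h with hF'
  have hFx : ∀ x : G, F x = (P x).1 • g' + (P x).2 • h' := fun _ => rfl
  have hF'x : ∀ x : G, F' x = (P' x).1 • g + (P' x).2 • h := fun _ => rfl
  have key : ∀ (a b : ℤ), F (a • g + b • h) = a • g' + b • h' := by
    intro a b
    have h0 : (P (a • g + b • h)).1 • g + (P (a • g + b • h)).2 • h = a • g + b • h :=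
      hP _
    have hdiff : ((P (a • g + b • h)).1 - a) • g + ((P (a • g + b • h)).2 - b) • h = 0 := by
      have e1 : ((P (a • g + b • h)).1 - a) • g + ((P (a • g + b • h)).2 - b) • h =
          ((P (a • g + b • h)).1 • g + (P (a • g + b • h)).2 • h) - (a • g + b • h) := by
        rw [sub_smul, sub_smul]; abel
      rw [e1, h0, sub_self]
    have hdiff' := (hker _ _).mp hdiff
    have e2 : ((P (a • g + b • h)).1 - a) • g' + ((P (a • g + b • h)).2 - b) • h' =
        ((P (a • g + b • h)).1 • g' + (P (a • g + b • h)).2 • h') - (a • g' + b • h') := by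
      rw [sub_smul, sub_smul]; abel
    rw [e2] at hdiff'
    rw [hFx]
    exact sub_eq_zero.mp hdiff'
  have key' : ∀ (a b : ℤ), F' (a • g' + b • h') = a • g + b • h := by
    intro a b
    have h0 : (P' (a • g' + b • h')).1 • g' + (P' (a • g' + b • h')).2 • h' =
        a • g' + b • h' := hP' _
    have hdiff : ((P' (a • g' + b • h')).1 - a) • g' +
        ((P' (a • g' + b • h')).2 - b) • h' = 0 := by
      have e1 : ((P' (a • g' + b • h')).1 - a) • g' + ((P' (a • g' + b • h')).2 - b) • h' =
          ((P' (a • g' + b • h')).1 • g' + (P' (a • g' + b • h')).2 • h') -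
            (a • g' + b • h') := by
        rw [sub_smul, sub_smul]; abel
      rw [e1, h0, sub_self]
    have hdiff' := (hker _ _).mpr hdiff
    have e2 : ((P' (a • g' + b • h')).1 - a) • g + ((P' (a • g' + b • h')).2 - b) • h =
        ((P' (a • g' + b • h')).1 • g + (P' (a • g' + b • h')).2 • h) - (a • g + b • h) := by
      rw [sub_smul, sub_smul]; abel
    rw [e2] at hdiff'
    rw [hF'x]
    exact sub_eq_zero.mp hdiff'
  have hFinv : ∀ x : G, F' (F x) = x := by
    intro x
    rw [hFx x, key' (P x).1 (P x).2, hP x]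
  have hFinv' : ∀ x : G, F (F' x) = x := by
    intro x
    rw [hF'x x, key (P' x).1 (P' x).2, hP' x]
  have hmapadd : ∀ x y : G, F (x + y) = F x + F y := by
    intro x y
    have hxy : ((P x).1 + (P y).1) • g + ((P x).2 + (P y).2) • h = x + y := by
      have e1 : ((P x).1 + (P y).1) • g + ((P x).2 + (P y).2) • h =
          ((P x).1 • g + (P x).2 • h) + ((P y).1 • g + (P y).2 • h) := by
        rw [add_smul, add_smul]; abel
      rw [e1, hP x, hP y]
    have h1 : F (x + y) = F (((P x).1 + (P y).1) • g + ((P x).2 + (P y).2) • h) := by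
      rw [hxy]
    rw [h1, key, hFx x, hFx y, add_smul, add_smul]
    abel
  refine ⟨{ toFun := F, invFun := F', left_inv := hFinv, right_inv := hFinv',
            map_add' := hmapadd }, ?_, ?_⟩
  · show F g = g'
    have e1 : (1 : ℤ) • g + (0 : ℤ) • h = g := by simp
    rw [← e1, key]; simp
  · show F h = h'
    have e1 : (0 : ℤ) • g + (1 : ℤ) • h = h := by simp
    rw [← e1, key]; simp

noncomputable def iota (hk : m = n * k) : ZMod n →+ ZMod m :=
  ZMod.lift n ⟨(zmultiplesHom (ZMod m)) (k : ZMod m), by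
    show (n : ℤ) • (k : ZMod m) = 0
    rw [zsmul_eq_mul]; push_cast
    rw [← Nat.cast_mul, ← hk, ZMod.natCast_self]⟩

lemma iota_intCast (hk : m = n * k) (z : ℤ) :
    iota hk ((z : ZMod n)) = z • (k : ZMod m) := by
  rw [iota, ZMod.lift_coe]; rfl

def pi (hk : m = n * k) : ZMod m →+* ZMod n := ZMod.castHom ⟨k, hk⟩ (ZMod n)

lemma pi_intCast (hk : m = n * k) (z : ℤ) : pi hk ((z : ZMod m)) = (z : ZMod n) :=
  map_intCast _ z

lemma pi_iota (hk : m = n * k) (x : ZMod n) : pi hk (iota hk x) = (k : ℤ) • x := by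
  obtain ⟨z, rfl⟩ := ZMod.intCast_surjective x
  rw [iota_intCast, map_zsmul, zsmul_eq_mul, zsmul_eq_mul, map_natCast]
  push_cast; ring

lemma iota_pi (hk : m = n * k) (y : ZMod m) : iota hk (pi hk y) = (k : ℤ) • y := by
  obtain ⟨z, rfl⟩ := ZMod.intCast_surjective y
  rw [pi_intCast, iota_intCast, zsmul_eq_mul, zsmul_eq_mul]
  push_cast; ring

noncomputable def tauFun (hk : m = n * k) (e t : ℤ) :
    ZMod n × ZMod m → ZMod n × ZMod m :=
  fun v => ((-e) • v.1 + pi hk v.2, (-t) • iota hk v.1 + e • v.2)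

lemma tauFun_add (hk : m = n * k) (e t : ℤ) (v w : ZMod n × ZMod m) :
    tauFun hk e t (v + w) = tauFun hk e t v + tauFun hk e t w := by
  unfold tauFun
  ext
  · show (-e) • (v.1 + w.1) + pi hk (v.2 + w.2) = _
    rw [smul_add, map_add]
    show _ = ((-e) • v.1 + pi hk v.2) + ((-e) • w.1 + pi hk w.2)
    abel
  · show (-t) • iota hk (v.1 + w.1) + e • (v.2 + w.2) = _
    rw [smul_add, map_add, smul_add]
    show _ = ((-t) • iota hk v.1 + e • v.2) + ((-t) • iota hk w.1 + e • w.2)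
    abel

lemma tauFun_invol (hk : m = n * k) (e t : ℤ) (het : e ^ 2 - 1 = k * t)
    (v : ZMod n × ZMod m) : tauFun hk e t (tauFun hk e t v) = v := by
  unfold tauFun
  have hcoef : (-e * -e + -t * (k : ℤ)) = 1 := by linarith [het, sq e]
  ext
  · show (-e) • ((-e) • v.1 + pi hk v.2) + pi hk ((-t) • iota hk v.1 + e • v.2) = v.1
    simp only [smul_add, map_add, map_zsmul, pi_iota, smul_smul]
    have e1 : (-e * -e) • v.1 + (-e) • (pi hk) v.2 + ((-t * (k:ℤ)) • v.1 + e • (pi hk) v.2)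
        = (-e * -e + -t * (k:ℤ)) • v.1 + (-e + e) • (pi hk) v.2 := by
      rw [add_smul, add_smul]; abel
    rw [e1, hcoef, one_smul, neg_add_cancel, zero_smul, add_zero]
  · show (-t) • iota hk ((-e) • v.1 + pi hk v.2) + e • ((-t) • iota hk v.1 + e • v.2) = v.2
    simp only [smul_add, map_add, map_zsmul, iota_pi, smul_smul]
    have e1 : (-t * -e) • iota hk v.1 + (-t * (k:ℤ)) • v.2 +
          ((e * -t) • iota hk v.1 + (e * e) • v.2)
        = (-t * -e + e * -t) • iota hk v.1 + (-e * -e + -t * (k:ℤ)) • v.2 := by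
      rw [add_smul, add_smul]; ring_nf
    rw [e1, hcoef, one_smul]
    have e2 : (-t * -e + e * -t : ℤ) = 0 := by ring
    rw [e2, zero_smul, zero_add]


lemma tau_swap1 (hk : m = n * k) (e t : ℤ) :
    tauFun hk e t ((0, 1) : ZMod n × ZMod m) = (1, (e : ZMod m)) := by
  unfold tauFun
  ext
  · show (-e) • (0 : ZMod n) + pi hk (1 : ZMod m) = 1
    rw [smul_zero, zero_add, map_one]
  · show (-t) • iota hk (0 : ZMod n) + e • (1 : ZMod m) = (e : ZMod m)
    rw [map_zero, smul_zero, zero_add, zsmul_eq_mul, mul_one]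

lemma tau_swap2 (hk : m = n * k) (e t : ℤ) (het : e ^ 2 - 1 = k * t) :
    tauFun hk e t ((1, (e : ZMod m)) : ZMod n × ZMod m) = (0, 1) := by
  unfold tauFun
  ext
  · show (-e) • (1 : ZMod n) + pi hk ((e : ZMod m)) = 0
    rw [pi_intCast, zsmul_eq_mul, mul_one]
    push_cast
    ring
  · show (-t) • iota hk (1 : ZMod n) + e • ((e : ZMod m)) = 1
    have h1 : (1 : ZMod n) = ((1 : ℤ) : ZMod n) := by norm_num
    rw [h1, iota_intCast, one_smul, zsmul_eq_mul, zsmul_eq_mul]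
    have e1 : ((-t : ℤ) : ZMod m) * ((k : ℕ) : ZMod m) + ((e : ℤ) : ZMod m) * ((e:ℤ) : ZMod m)
        = ((-t * k + e * e : ℤ) : ZMod m) := by push_cast; ring
    rw [e1, show (-t * k + e * e : ℤ) = 1 by linear_combination het, Int.cast_one]

lemma closure_canonical (hn : 0 < n) (hm : 0 < m) (e : ℤ) :
    AddSubgroup.closure ({((0, 1) : ZMod n × ZMod m), (1, (e : ZMod m))} :
      Set (ZMod n × ZMod m)) = ⊤ := by
  haveI : NeZero n := ⟨hn.ne'⟩
  haveI : NeZero m := ⟨hm.ne'⟩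
  rw [eq_top_iff]
  intro v _
  rw [AddSubgroup.mem_closure_pair]
  set b : ℤ := (v.1.val : ℤ) with hb
  set a : ℤ := ((v.2 - b • (e : ZMod m)).val : ℤ) with ha
  refine ⟨a, b, ?_⟩
  have hbv : ((b : ℤ) : ZMod n) = v.1 := by
    rw [hb, Int.cast_natCast, ZMod.natCast_val, ZMod.cast_id]
  have hav : ((a : ℤ) : ZMod m) = v.2 - b • (e : ZMod m) := by
    rw [ha, Int.cast_natCast, ZMod.natCast_val, ZMod.cast_id]
  ext
  · show a • (0 : ZMod n) + b • (1 : ZMod n) = v.1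
    rw [smul_zero, zero_add, zsmul_eq_mul, mul_one, hbv]
  · show a • (1 : ZMod m) + b • (e : ZMod m) = v.2
    rw [zsmul_eq_mul, mul_one, hav]
    abel

lemma rel_canonical (hk : m = n * k) (e : ℤ) :
    (n : ℤ) • ((1, (e : ZMod m)) : ZMod n × ZMod m) =
      e • ((n : ℤ) • ((0, 1) : ZMod n × ZMod m)) := by
  ext
  · show (n : ℤ) • (1 : ZMod n) = e • ((n : ℤ) • (0 : ZMod n))
    rw [smul_zero, smul_zero, zsmul_eq_mul, mul_one]
    push_cast
    rw [ZMod.natCast_self]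
  · show (n : ℤ) • (e : ZMod m) = e • ((n : ℤ) • (1 : ZMod m))
    rw [zsmul_eq_mul, zsmul_eq_mul, zsmul_eq_mul, mul_one]
    push_cast
    ring

end Stmt14Aux

open Stmt14Aux in
/-- For `1 ≤ n ≤ m` with `n ∣ m`, the number of orbits of `Aut(G)` on the
transpositional generating pairs of `G = ℤ_n ⊕ ℤ_m` equals the number of solutions of
`e² ≡ 1 (mod m/n)` in `ℤ_{m/n}`. -/
theorem stmt14 (n m : ℕ) (h1 : 1 ≤ n) (hle : n ≤ m) (hnm : n ∣ m) :
    Nat.card (Quot (fun x y : {q : (ZMod n × ZMod m) × (ZMod n × ZMod m) //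
          AddSubgroup.closure ({q.1, q.2} : Set (ZMod n × ZMod m)) = ⊤ ∧
          ∃ τ : AddAut (ZMod n × ZMod m), τ q.1 = q.2 ∧ τ q.2 = q.1} =>
        ∃ σ : AddAut (ZMod n × ZMod m), σ x.1.1 = y.1.1 ∧ σ x.1.2 = y.1.2)) =
      Nat.card {e : ZMod (m / n) // e ^ 2 = 1} := by
  classical
  set k := m / n with hkdef
  have hk : m = n * k := (Nat.mul_div_cancel' hnm).symm
  have hn : 0 < n := h1
  have hm : 0 < m := lt_of_lt_of_le h1 hle
  have hkpos : 0 < k := Nat.div_pos hle hn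
  haveI : NeZero n := ⟨hn.ne'⟩
  haveI : NeZero m := ⟨hm.ne'⟩
  haveI : NeZero k := ⟨hkpos.ne'⟩
  -- the subtype of transpositional generating pairs
  set S := {q : (ZMod n × ZMod m) × (ZMod n × ZMod m) //
          AddSubgroup.closure ({q.1, q.2} : Set (ZMod n × ZMod m)) = ⊤ ∧
          ∃ τ : AddAut (ZMod n × ZMod m), τ q.1 = q.2 ∧ τ q.2 = q.1} with hS
  have nsmul_zmodn : ∀ x : ZMod n, (n : ℤ) • x = 0 := by
    intro x
    rw [zsmul_eq_mul, Int.cast_natCast, ZMod.natCast_self, zero_mul]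
  have ordg : ∀ q : S, addOrderOf q.1.1 = m := by
    intro q
    obtain ⟨τ, hτ1, hτ2⟩ := q.2.2
    exact ord_g hnm q.2.1 τ hτ1
  have ordh : ∀ q : S, addOrderOf q.1.2 = m := by
    intro q
    obtain ⟨τ, hτ1, hτ2⟩ := q.2.2
    have hgen2 : AddSubgroup.closure ({q.1.2, q.1.1} : Set (ZMod n × ZMod m)) = ⊤ := by
      rw [Set.pair_comm]; exact q.2.1
    exact ord_g hnm hgen2 τ hτ2
  have exE : ∀ q : S, ∃ e : ℤ, (n : ℤ) • q.1.2 = e • ((n : ℤ) • q.1.1) := by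
    intro q
    set a2 : ZMod m := (n : ℤ) • q.1.1.2 with ha2
    set b2 : ZMod m := (n : ℤ) • q.1.2.2 with hb2def
    have hiff : ∀ z : ℤ, z • a2 = 0 ↔ (k : ℤ) ∣ z := by
      intro z
      rw [← zsmul_ng hn hk (ordg q) z]
      constructor
      · intro hz
        ext
        · show z • ((n : ℤ) • q.1.1.1) = 0
          rw [nsmul_zmodn, smul_zero]
        · exact hz
      · intro hz
        have := congrArg Prod.snd hz
        exact this
    have hb2 : (k : ℤ) • b2 = 0 := by
      rw [hb2def, smul_smul]
      have he1 : ((k : ℤ) * n) = ((n * k : ℕ) : ℤ) := by push_cast; ring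
      rw [he1, ← hk, zsmul_eq_mul, Int.cast_natCast, ZMod.natCast_self, zero_mul]
    obtain ⟨e, he⟩ := exists_dlog hn hkpos hk a2 b2 hiff hb2
    refine ⟨e, ?_⟩
    ext
    · show (n : ℤ) • q.1.2.1 = e • ((n : ℤ) • q.1.1.1)
      rw [nsmul_zmodn, nsmul_zmodn, smul_zero]
    · exact he
  choose E hE using exE
  have uniq : ∀ q : S, ∀ e' : ℤ, (n : ℤ) • q.1.2 = e' • ((n : ℤ) • q.1.1) →
      ((E q : ℤ) : ZMod k) = ((e' : ℤ) : ZMod k) := by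
    intro q e' he'
    have hz : (E q - e') • ((n : ℤ) • q.1.1) = 0 := by
      rw [sub_smul, ← hE q, ← he', sub_self]
    have hdvd := (zsmul_ng hn hk (ordg q) _).mp hz
    have : ((E q - e' : ℤ) : ZMod k) = 0 := by
      rw [ZMod.intCast_zmod_eq_zero_iff_dvd]; exact hdvd
    rw [Int.cast_sub] at this
    linear_combination this
  have sq1 : ∀ q : S, ((E q : ℤ) : ZMod k) ^ 2 = 1 := by
    intro q
    obtain ⟨τ, hτ1, hτ2⟩ := q.2.2
    have happ := congrArg τ (hE q)
    rw [map_zsmul, map_zsmul, map_zsmul, hτ1, hτ2] at happ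
    -- happ : (n:ℤ) • q.1.1 = E q • ((n:ℤ) • q.1.2)
    have h2 : (n : ℤ) • q.1.1 = (E q * E q) • ((n : ℤ) • q.1.1) := by
      calc (n : ℤ) • q.1.1 = E q • ((n : ℤ) • q.1.2) := happ
        _ = E q • (E q • ((n : ℤ) • q.1.1)) := by rw [hE q]
        _ = (E q * E q) • ((n : ℤ) • q.1.1) := smul_smul _ _ _
    have hz : (E q * E q - 1) • ((n : ℤ) • q.1.1) = 0 := by
      rw [sub_smul, one_smul, ← h2, sub_self]
    have hdvd := (zsmul_ng hn hk (ordg q) _).mp hz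
    have : ((E q * E q - 1 : ℤ) : ZMod k) = 0 := by
      rw [ZMod.intCast_zmod_eq_zero_iff_dvd]; exact hdvd
    push_cast at this
    linear_combination this
  set Fb : S → {e : ZMod k // e ^ 2 = 1} := fun q => ⟨((E q : ℤ) : ZMod k), sq1 q⟩ with hFb
  have hinv : ∀ q q' : S,
      (∃ σ : AddAut (ZMod n × ZMod m), σ q.1.1 = q'.1.1 ∧ σ q.1.2 = q'.1.2) →
      Fb q = Fb q' := by
    rintro q q' ⟨σ, hσ1, hσ2⟩
    have happ := congrArg σ (hE q)
    rw [map_zsmul, map_zsmul, map_zsmul, hσ1, hσ2] at happ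
    exact Subtype.ext (uniq q' (E q) happ).symm
  refine Nat.card_eq_of_bijective (Quot.lift Fb hinv) ⟨?_, ?_⟩
  · -- injectivity
    intro x y
    induction x using Quot.ind with | _ q =>
    induction y using Quot.ind with | _ q' =>
    intro hxy
    have hEq : ((E q : ℤ) : ZMod k) = ((E q' : ℤ) : ZMod k) := by
      have : Fb q = Fb q' := hxy
      exact congrArg Subtype.val this
    apply Quot.sound
    -- build σ via equal kernels
    have hdvd : (k : ℤ) ∣ E q - E q' := by
      rw [← ZMod.intCast_zmod_eq_zero_iff_dvd, Int.cast_sub, hEq, sub_self]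
    have hrel' : (n : ℤ) • q'.1.2 = E q • ((n : ℤ) • q'.1.1) := by
      have hz : (E q - E q') • ((n : ℤ) • q'.1.1) = 0 :=
        (zsmul_ng hn hk (ordg q') _).mpr hdvd
      rw [sub_smul, sub_eq_zero] at hz
      rw [hz]
      exact hE q'
    have hker : ∀ z₁ z₂ : ℤ, z₁ • q.1.1 + z₂ • q.1.2 = 0 ↔
        z₁ • q'.1.1 + z₂ • q'.1.2 = 0 := by
      intro z₁ z₂
      rw [ker_iff hn hm q.2.1 (ordg q) (hE q) z₁ z₂,
        ker_iff hn hm q'.2.1 (ordg q') hrel' z₁ z₂]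
    obtain ⟨σ, hσ1, hσ2⟩ := exists_aut q.1.1 q.1.2 q'.1.1 q'.1.2 q.2.1 q'.2.1 hker
    exact ⟨σ, hσ1, hσ2⟩
  · -- surjectivity
    rintro ⟨e₀, he₀⟩
    set e : ℤ := (e₀.val : ℤ) with hedef
    have hecast : ((e : ℤ) : ZMod k) = e₀ := by
      rw [hedef, Int.cast_natCast, ZMod.natCast_val, ZMod.cast_id]
    have hdvd : (k : ℤ) ∣ e ^ 2 - 1 := by
      rw [← ZMod.intCast_zmod_eq_zero_iff_dvd]
      push_cast
      rw [hecast]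
      rw [he₀]
      ring
    obtain ⟨t, ht⟩ := hdvd
    have hgenc := closure_canonical (n := n) (m := m) hn hm e
    set τ : AddAut (ZMod n × ZMod m) :=
      { toFun := tauFun hk e t
        invFun := tauFun hk e t
        left_inv := tauFun_invol hk e t ht
        right_inv := tauFun_invol hk e t ht
        map_add' := tauFun_add hk e t } with hτdef
    have hq2 : AddSubgroup.closure
          ({((0, 1), (1, (e : ZMod m))).1, ((0, 1), (1, (e : ZMod m))).2} :
            Set (ZMod n × ZMod m)) = ⊤ ∧
        ∃ τ : AddAut (ZMod n × ZMod m),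
          τ ((0, 1), (1, (e : ZMod m))).1 = ((0, 1), (1, (e : ZMod m))).2 ∧
          τ ((0, 1), (1, (e : ZMod m))).2 = ((0, 1), (1, (e : ZMod m))).1 := by
      refine ⟨hgenc, ⟨τ, ?_, ?_⟩⟩
      · exact tau_swap1 hk e t
      · exact tau_swap2 hk e t ht
    set q : S := ⟨((0, 1), (1, (e : ZMod m))), hq2⟩ with hqdef
    refine ⟨Quot.mk _ q, ?_⟩
    show Fb q = ⟨e₀, he₀⟩
    apply Subtype.ext
    show ((E q : ℤ) : ZMod k) = e₀
    have hrelc : (n : ℤ) • q.1.2 = e • ((n : ℤ) • q.1.1) := rel_canonical hk e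
    rw [uniq q e hrelc, hecast]
end

section
/- Let 1 ≤ n ≤ m be integers with n dividing m, and let G = ℤ_n ⊕ ℤ_m. Then Aut(G) has exactly one orbit on the set of generating pairs of G if and only if m = n. -/
lemma closure_pair_top (n m : ℕ) [NeZero n] [NeZero m] :
    AddSubgroup.closure ({((1 : ZMod n), (0 : ZMod m)), ((0 : ZMod n), (1 : ZMod m))} :
      Set (ZMod n × ZMod m)) = ⊤ := by
  rw [eq_top_iff]
  rintro ⟨a, b⟩ -
  have h1 : ((1 : ZMod n), (0 : ZMod m)) ∈ AddSubgroup.closure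
      ({((1 : ZMod n), (0 : ZMod m)), ((0 : ZMod n), (1 : ZMod m))} : Set (ZMod n × ZMod m)) :=
    AddSubgroup.subset_closure (by simp)
  have h2 : ((0 : ZMod n), (1 : ZMod m)) ∈ AddSubgroup.closure
      ({((1 : ZMod n), (0 : ZMod m)), ((0 : ZMod n), (1 : ZMod m))} : Set (ZMod n × ZMod m)) :=
    AddSubgroup.subset_closure (by simp)
  have : (a, b) = a.val • ((1 : ZMod n), (0 : ZMod m)) + b.val • ((0 : ZMod n), (1 : ZMod m)) := by
    ext <;> simp [Prod.smul_def, ZMod.natCast_val, ZMod.cast_id]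
  rw [this]
  exact AddSubgroup.add_mem _ (AddSubgroup.nsmul_mem _ h1 _) (AddSubgroup.nsmul_mem _ h2 _)

lemma key_equiv (n : ℕ) [NeZero n] (x₁ x₂ : ZMod n × ZMod n)
    (hx : AddSubgroup.closure ({x₁, x₂} : Set (ZMod n × ZMod n)) = ⊤) :
    ∃ e : (ZMod n × ZMod n) ≃ₗ[ZMod n] (ZMod n × ZMod n),
      e (1, 0) = x₁ ∧ e (0, 1) = x₂ := by
  set f : (ZMod n × ZMod n) →ₗ[ZMod n] (ZMod n × ZMod n) :=
    LinearMap.coprod (LinearMap.toSpanSingleton (ZMod n) _ x₁)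
      (LinearMap.toSpanSingleton (ZMod n) _ x₂) with hf
  have hsurj : Function.Surjective f := by
    intro z
    have hz : z ∈ AddSubgroup.closure ({x₁, x₂} : Set (ZMod n × ZMod n)) := hx ▸ trivial
    have : AddSubgroup.closure ({x₁, x₂} : Set (ZMod n × ZMod n)) ≤
        (LinearMap.range f).toAddSubgroup := by
      apply AddSubgroup.closure_le _ |>.2
      rintro y (rfl | rfl)
      · exact ⟨(1, 0), by simp [hf, LinearMap.coprod_apply]⟩
      · exact ⟨(0, 1), by simp [hf, LinearMap.coprod_apply]⟩
    exact this hz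
  have hinj : Function.Injective f := Finite.injective_iff_surjective.2 hsurj
  refine ⟨LinearEquiv.ofBijective f ⟨hinj, hsurj⟩, ?_, ?_⟩ <;>
    simp [hf, LinearMap.coprod_apply]

/-- For `1 ≤ n ≤ m` with `n ∣ m`, the group `G = ℤ_n ⊕ ℤ_m` has exactly one
orbit of `Aut(G)` on its generating pairs if and only if `m = n`. -/
theorem stmt15 (n m : ℕ) (h1 : 1 ≤ n) (hle : n ≤ m) (hnm : n ∣ m) :
    Nat.card (Quot (fun x y : {q : (ZMod n × ZMod m) × (ZMod n × ZMod m) //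
          AddSubgroup.closure ({q.1, q.2} : Set (ZMod n × ZMod m)) = ⊤} =>
        ∃ σ : AddAut (ZMod n × ZMod m), σ x.1.1 = y.1.1 ∧ σ x.1.2 = y.1.2)) = 1 ↔
      m = n := by
  have hn : NeZero n := ⟨by omega⟩
  have hm : NeZero m := ⟨by omega⟩
  constructor
  · -- card = 1 → m = n, contrapositive
    intro hcard
    by_contra hne
    have hlt : n < m := lt_of_le_of_ne hle (fun h => hne h.symm)
    -- two generating pairs with first components of different orders
    have hc : AddSubgroup.closure ({((1 : ZMod n), (0 : ZMod m)), ((0 : ZMod n), (1 : ZMod m))} :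
        Set (ZMod n × ZMod m)) = ⊤ := closure_pair_top n m
    have hc' : AddSubgroup.closure ({((0 : ZMod n), (1 : ZMod m)), ((1 : ZMod n), (0 : ZMod m))} :
        Set (ZMod n × ZMod m)) = ⊤ := by rw [Set.pair_comm]; exact hc
    set T := {q : (ZMod n × ZMod m) × (ZMod n × ZMod m) //
      AddSubgroup.closure ({q.1, q.2} : Set (ZMod n × ZMod m)) = ⊤}
    set r := (fun x y : T =>
        ∃ σ : AddAut (ZMod n × ZMod m), σ x.1.1 = y.1.1 ∧ σ x.1.2 = y.1.2)
    let a : T := ⟨(((1 : ZMod n), (0 : ZMod m)), ((0 : ZMod n), (1 : ZMod m))), hc⟩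
    let b : T := ⟨(((0 : ZMod n), (1 : ZMod m)), ((1 : ZMod n), (0 : ZMod m))), hc'⟩
    have hsub : Subsingleton (Quot r) := (Nat.card_eq_one_iff_unique.mp hcard).1
    have heq : Quot.mk r a = Quot.mk r b := Subsingleton.elim _ _
    -- invariant: addOrderOf of first component
    have hlift : ∀ x y : T, r x y → addOrderOf x.1.1 = addOrderOf y.1.1 := by
      rintro x y ⟨σ, h₁, _⟩
      rw [← h₁, AddEquiv.addOrderOf_eq]
    have this : addOrderOf (((1 : ZMod n), (0 : ZMod m)) : ZMod n × ZMod m) =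
        addOrderOf (((0 : ZMod n), (1 : ZMod m)) : ZMod n × ZMod m) :=
      congrArg (Quot.lift (fun x : T => addOrderOf x.1.1) hlift) heq
    have ha : addOrderOf ((1 : ZMod n), (0 : ZMod m)) = n := by
      rw [Prod.addOrderOf, ZMod.addOrderOf_one, addOrderOf_zero, Nat.lcm_one_right]
    have hb : addOrderOf ((0 : ZMod n), (1 : ZMod m)) = m := by
      rw [Prod.addOrderOf, ZMod.addOrderOf_one, addOrderOf_zero, Nat.lcm_one_left]
    rw [ha, hb] at this
    omega
  · rintro rfl
    rw [Nat.card_eq_one_iff_unique]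
    constructor
    · constructor
      rintro x y
      induction x using Quot.ind with | _ x =>
      induction y using Quot.ind with | _ y =>
      apply Quot.sound
      obtain ⟨ex, hex1, hex2⟩ := key_equiv m x.1.1 x.1.2 x.2
      obtain ⟨ey, hey1, hey2⟩ := key_equiv m y.1.1 y.1.2 y.2
      refine ⟨(ex.symm ≪≫ₗ ey).toAddEquiv, ?_, ?_⟩
      · show (ex.symm ≪≫ₗ ey) x.1.1 = y.1.1
        rw [← hex1, ← hey1, LinearEquiv.trans_apply, LinearEquiv.symm_apply_apply]
      · show (ex.symm ≪≫ₗ ey) x.1.2 = y.1.2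
        rw [← hex2, ← hey2, LinearEquiv.trans_apply, LinearEquiv.symm_apply_apply]
    · exact ⟨Quot.mk _ ⟨(((1 : ZMod m), (0 : ZMod m)), ((0 : ZMod m), (1 : ZMod m))),
        closure_pair_top m m⟩⟩
end

section
/- Let G be a nilpotent group of nilpotency class c ≥ 2 generated by two elements R and L with L² = 1. Then the subgroup H = ⟨R, L⁻¹RL⟩ is nilpotent of nilpotency class at most c − 1. -/
/-!
Since `⁅R, L⁻¹ * R * L⁆ = ⁅⁅L⁻¹, R⁆, R⁆⁻¹` is a triple commutator, the two generators of
`H = ⟨R, L⁻¹RL⟩` commute modulo `γ₃(G)`, so `⁅H, H⁆ ≤ γ₃(G)`. Inductively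
`γₖ₊₁(H) ≤ γₖ₊₂(G)`, and `γ_{c+1}(G) = 1` gives `γ_c(H) = 1`.
In Mathlib's indexing `γₖ₊₁ = lowerCentralSeries ⊤ k`.
-/

open scoped commutatorElement

namespace Subgroup

variable {G : Type*} [Group G]

theorem commutatorElement_conj_mem_lowerCentralSeries_two (x y : G) :
    ⁅x, y⁻¹ * x * y⁆ ∈ (⊤ : Subgroup G).lowerCentralSeries 2 := by
  have h : ⁅x, y⁻¹ * x * y⁆ = ⁅⁅y⁻¹, x⁆, x⁆⁻¹ := by
    simp only [commutatorElement_def]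
    group
  rw [h]
  exact inv_mem (commutator_mem_commutator
    (commutator_mem_commutator (mem_top _) (mem_top _)) (mem_top _))

theorem commutator_closure_le_of_commutatorElement_mem {s : Set G} {N : Subgroup G} [N.Normal]
    (h : ∀ a ∈ s, ∀ b ∈ s, ⁅a, b⁆ ∈ N) : ⁅closure s, closure s⁆ ≤ N := by
  let f := QuotientGroup.mk' N
  have hf : ∀ g, f g = 1 ↔ g ∈ N := QuotientGroup.eq_one_iff
  have hcomm : IsMulCommutative (closure (f '' s)) := by
    refine isMulCommutative_closure ?_
    rintro _ ⟨a, ha, rfl⟩ _ ⟨b, hb, rfl⟩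
    rw [← commutatorElement_eq_one_iff_mul_comm, ← map_commutatorElement, hf]
    exact h a ha b hb
  have hmem : ∀ g ∈ closure s, f g ∈ closure (f '' s) := fun g hg => by
    rw [← MonoidHom.map_closure]
    exact mem_map_of_mem f hg
  rw [commutator_le]
  intro x hx y hy
  rw [← hf, map_commutatorElement, commutatorElement_eq_one_iff_mul_comm]
  exact setLike_mul_comm (hmem x hx) (hmem y hy)

theorem lowerCentralSeries_succ_le_of_commutator_le {S : Subgroup G} {m : ℕ}
    (h : ⁅S, S⁆ ≤ (⊤ : Subgroup G).lowerCentralSeries (m + 1)) (n : ℕ) :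
    S.lowerCentralSeries (n + 1) ≤ (⊤ : Subgroup G).lowerCentralSeries (n + m + 1) := by
  induction n with
  | zero => simpa using h
  | succ n ih =>
    rw [lowerCentralSeries_succ, show n + 1 + m + 1 = n + m + 1 + 1 by omega,
      lowerCentralSeries_succ]
    exact commutator_mono ih le_top

theorem nilpotencyClass_le_pred_of_commutator_le [Group.IsNilpotent G] {S : Subgroup G}
    (h : ⁅S, S⁆ ≤ (⊤ : Subgroup G).lowerCentralSeries 2) (hG : 2 ≤ Group.nilpotencyClass G) :
    Group.nilpotencyClass S ≤ Group.nilpotencyClass G - 1 := by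
  obtain ⟨d, hd⟩ : ∃ d, Group.nilpotencyClass G = d + 2 := ⟨_, (Nat.sub_add_cancel hG).symm⟩
  have hS : S.lowerCentralSeries (d + 1) = ⊥ := by
    rw [eq_bot_iff, ← lowerCentralSeries_nilpotencyClass, hd]
    exact lowerCentralSeries_succ_le_of_commutator_le (m := 1) h d
  rw [← top_subtype_lowerCentralSeries, map_eq_bot_iff_of_injective _ S.subtype_injective,
    lowerCentralSeries_eq_bot_iff_nilpotencyClass_le] at hS
  omega

end Subgroup

theorem stmt16_general {G : Type*} [Group G] [Group.IsNilpotent G]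
    (c : ℕ) (hc : 2 ≤ c) (hclass : Group.nilpotencyClass G = c)
    (R L : G) :
    Group.nilpotencyClass ↥(Subgroup.closure ({R, L⁻¹ * R * L} : Set G)) ≤ c - 1 := by
  have hRL := Subgroup.commutatorElement_conj_mem_lowerCentralSeries_two R L
  have hKK : ⁅Subgroup.closure {R, L⁻¹ * R * L}, Subgroup.closure {R, L⁻¹ * R * L}⁆ ≤
      (⊤ : Subgroup G).lowerCentralSeries 2 := by
    refine Subgroup.commutator_closure_le_of_commutatorElement_mem ?_
    rintro a (rfl | rfl) b (rfl | rfl)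
    · simp
    · exact hRL
    · rw [← commutatorElement_inv]
      exact inv_mem hRL
    · simp
  subst hclass
  exact Subgroup.nilpotencyClass_le_pred_of_commutator_le hKK hc

/-- If `G` is nilpotent of class `c ≥ 2` and is generated by `R, L` with
`L² = 1`, then `H = ⟨R, L⁻¹RL⟩` is nilpotent (as a subgroup of `G`) of class at most
`c − 1`. -/
theorem stmt16 {G : Type*} [Group G] [Group.IsNilpotent G]
    (c : ℕ) (hc : 2 ≤ c) (hclass : Group.nilpotencyClass G = c)
    (R L : G) (hL : L ^ 2 = 1) (hgen : Subgroup.closure ({R, L} : Set G) = ⊤) :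
    Group.nilpotencyClass ↥(Subgroup.closure ({R, L⁻¹ * R * L} : Set G)) ≤ c - 1 :=
  stmt16_general c hc hclass R L
end
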